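/- arXiv:math/0702473 — 7 statements merged into one kernel-verified Lean document; each statement's English description precedes it below -/
import Mathlib

section
/- (Chernoff upper bound in the proof of Cramér's theorem.) For every x ≥ E[X₁] and every n ≥ 1, P[Sₙ/n ≥ x] ≤ exp(−n Γ*(x)) (with exp(−∞) = 0). -/
open MeasureTheory ProbabilityTheory Filter Topology

/-- The cumulant generating function `Γ(θ) = ln E[exp(θ X)]`, with values in `(-∞, ∞]`. -/
noncomputable def cgfE {Ω : Type*} [MeasurableSpace Ω] (P : Measure Ω) (X : Ω → ℝ) (θ : ℝ) :
    EReal :=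
  ENNReal.log (∫⁻ ω, ENNReal.ofReal (Real.exp (θ * X ω)) ∂P)

/-- The Fenchel–Legendre transform `Γ*(x) = sup_θ [θ x - Γ(θ)] ∈ [0, ∞]`. -/
noncomputable def cramerTransform {Ω : Type*} [MeasurableSpace Ω] (P : Measure Ω) (X : Ω → ℝ)
    (x : ℝ) : EReal :=
  ⨆ θ : ℝ, ((θ * x : ℝ) : EReal) - cgfE P X θ

/-- Mutual independence is preserved by a.e. modification. -/
lemma iIndepFun_congr_ae' {Ω : Type*} [MeasurableSpace Ω] {μ : Measure Ω} {X Y : ℕ → Ω → ℝ}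
    (h : iIndepFun X μ) (hXY : ∀ i, X i =ᵐ[μ] Y i) :
    iIndepFun Y μ := by
  rw [iIndepFun_iff_measure_inter_preimage_eq_mul] at h ⊢
  intro S sets hsets
  have h1 : ∀ i, (X i ⁻¹' sets i : Set Ω) =ᵐ[μ] (Y i ⁻¹' sets i) := fun i =>
    (hXY i).fun_comp (sets i)
  have h2 : (⋂ i ∈ S, Y i ⁻¹' sets i : Set Ω) =ᵐ[μ] (⋂ i ∈ S, X i ⁻¹' sets i) := by
    rw [eventuallyEq_set]
    filter_upwards [ae_all_iff.2 hXY] with ω hω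
    simp only [Set.mem_iInter, Set.mem_preimage]
    constructor <;> intro h' i hi
    · rw [hω i]; exact h' i hi
    · rw [← hω i]; exact h' i hi
  calc μ (⋂ i ∈ S, Y i ⁻¹' sets i) = μ (⋂ i ∈ S, X i ⁻¹' sets i) := measure_congr h2
    _ = ∏ i ∈ S, μ (X i ⁻¹' sets i) := h S hsets
    _ = ∏ i ∈ S, μ (Y i ⁻¹' sets i) := Finset.prod_congr rfl fun i _ => measure_congr (h1 i)

/-- Jensen-type bound: `exp (θ E[Y]) ≤ mgf Y θ`. -/
lemma exp_integral_le_mgf' {Ω : Type*} [MeasurableSpace Ω] {P : Measure Ω}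
    [IsProbabilityMeasure P] {Y : Ω → ℝ} (hint : Integrable Y P) {θ : ℝ}
    (h_int : Integrable (fun ω => Real.exp (θ * Y ω)) P) :
    Real.exp (θ * ∫ ω, Y ω ∂P) ≤ mgf Y P θ := by
  set m := ∫ ω, Y ω ∂P with hm
  have h1 : ∀ ω, Real.exp (θ * m) * (1 + (θ * Y ω - θ * m)) ≤ Real.exp (θ * Y ω) := by
    intro ω
    have h2 : (θ * Y ω - θ * m) + 1 ≤ Real.exp (θ * Y ω - θ * m) := Real.add_one_le_exp _
    calc Real.exp (θ * m) * (1 + (θ * Y ω - θ * m))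
        ≤ Real.exp (θ * m) * Real.exp (θ * Y ω - θ * m) :=
          mul_le_mul_of_nonneg_left (by linarith) (Real.exp_nonneg _)
      _ = Real.exp (θ * Y ω) := by rw [← Real.exp_add]; ring_nf
  have hi : Integrable (fun ω => Real.exp (θ * m) * (1 + (θ * Y ω - θ * m))) P :=
    ((integrable_const (1:ℝ)).add ((hint.const_mul θ).sub (integrable_const (θ * m)))).const_mul _
  have h3 := integral_mono hi h_int h1
  rw [integral_const_mul] at h3
  have hint1 : Integrable (fun ω => θ * Y ω) P := hint.const_mul θ
  have hint2 : Integrable (fun ω => θ * Y ω - θ * m) P := hint1.sub (integrable_const _)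
  have h4 : ∫ ω, (1 + (θ * Y ω - θ * m)) ∂P = 1 := by
    rw [integral_add (integrable_const _) hint2,
      integral_sub hint1 (integrable_const _), integral_const_mul, integral_const,
      integral_const]
    simp only [measure_univ, probReal_univ, ENNReal.toReal_one, smul_eq_mul, one_mul, mul_one, ← hm]
    ring
  rw [h4, mul_one] at h3
  exact h3

/-- Pointwise-in-`θ` Chernoff bound, for measurable random variables. -/
lemma chernoff_pointwise' {Ω : Type*} [MeasurableSpace Ω] (P : Measure Ω) [IsProbabilityMeasure P]
    (Y : ℕ → Ω → ℝ) (hmeas : ∀ i, Measurable (Y i))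
    (hindep : iIndepFun Y P)
    (hident : ∀ i, IdentDistrib (Y i) (Y 0) P P)
    (hint : Integrable (Y 0) P)
    (x : ℝ) (hx : ∫ ω, Y 0 ω ∂P ≤ x)
    (n : ℕ) (hn : 1 ≤ n) (θ : ℝ) :
    P {ω | x ≤ (∑ i ∈ Finset.range n, Y i ω) / n}
      ≤ EReal.exp (-(((n : ℝ) : EReal) * (((θ * x : ℝ) : EReal) - cgfE P (Y 0) θ))) := by
  have hnpos : (0:ℝ) < n := by exact_mod_cast hn
  by_cases hL : (∫⁻ ω, ENNReal.ofReal (Real.exp (θ * Y 0 ω)) ∂P) = ⊤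
  · simp only [cgfE, hL, ENNReal.log_top, EReal.sub_top]
    rw [EReal.mul_bot_of_pos (by exact_mod_cast EReal.coe_pos.2 hnpos)]
    simp
  · have hexp_meas : Measurable fun ω => Real.exp (θ * Y 0 ω) :=
      Real.measurable_exp.comp ((hmeas 0).const_mul θ)
    have h_int : Integrable (fun ω => Real.exp (θ * Y 0 ω)) P := by
      refine ⟨hexp_meas.aestronglyMeasurable, ?_⟩
      rw [hasFiniteIntegral_iff_ofReal (Filter.Eventually.of_forall fun ω => Real.exp_nonneg _)]
      exact lt_top_iff_ne_top.2 hL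
    have hmgf_pos : 0 < mgf (Y 0) P θ := mgf_pos h_int
    have hcgfE : cgfE P (Y 0) θ = ((cgf (Y 0) P θ : ℝ) : EReal) := by
      have h0 : ENNReal.ofReal (mgf (Y 0) P θ)
          = ∫⁻ ω, ENNReal.ofReal (Real.exp (θ * Y 0 ω)) ∂P :=
        ofReal_integral_eq_lintegral_ofReal h_int
          (Filter.Eventually.of_forall fun ω => Real.exp_nonneg _)
      rw [cgfE, ← h0, ENNReal.log_ofReal_of_pos hmgf_pos]
      rfl
    rw [hcgfE, ← EReal.coe_sub, ← EReal.coe_mul, ← EReal.coe_neg, EReal.exp_coe]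
    by_cases hθ : 0 ≤ θ
    · have hident' : ∀ i, Integrable (fun ω => Real.exp (θ * Y i ω)) P := fun i =>
        (((hident i).comp (Real.measurable_exp.comp (measurable_id.const_mul θ))).integrable_iff).2
          h_int
      have hsum_int : Integrable (fun ω => Real.exp (θ * (∑ i ∈ Finset.range n, Y i) ω)) P :=
        hindep.integrable_exp_mul_sum hmeas fun i _ => hident' i
      have hmgf_sum : mgf (∑ i ∈ Finset.range n, Y i) P θ = mgf (Y 0) P θ ^ n := by
        rw [hindep.mgf_sum hmeas]
        have heq : ∀ i ∈ Finset.range n, mgf (Y i) P θ = mgf (Y 0) P θ := fun i _ =>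
          ((hident i).comp (Real.measurable_exp.comp (measurable_id.const_mul θ))).integral_eq
        rw [Finset.prod_congr rfl heq, Finset.prod_const, Finset.card_range]
      have hset : {ω | x ≤ (∑ i ∈ Finset.range n, Y i ω) / n}
          = {ω | x * n ≤ (∑ i ∈ Finset.range n, Y i) ω} := by
        ext ω
        simp only [Set.mem_setOf_eq, Finset.sum_apply]
        exact le_div_iff₀ hnpos
      have hch := measure_ge_le_exp_mul_mgf (μ := P) (X := ∑ i ∈ Finset.range n, Y i)
        (x * n) hθ hsum_int
      rw [hmgf_sum] at hch
      have hrw : Real.exp (-θ * (x * n)) * mgf (Y 0) P θ ^ n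
          = Real.exp (-((n:ℝ) * (θ * x - cgf (Y 0) P θ))) := by
        rw [← Real.exp_log hmgf_pos, ← Real.exp_nat_mul, ← Real.exp_add]
        congr 1
        simp only [cgf]
        ring
      rw [hset, ← ENNReal.ofReal_toReal (measure_ne_top P _)]
      apply ENNReal.ofReal_le_ofReal
      calc (P _).toReal ≤ Real.exp (-θ * (x * n)) * mgf (Y 0) P θ ^ n := hch
        _ = Real.exp (-((n:ℝ) * (θ * x - cgf (Y 0) P θ))) := hrw
    · push_neg at hθ
      have hjensen := exp_integral_le_mgf' hint h_int
      have h5 : θ * x ≤ cgf (Y 0) P θ := by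
        calc θ * x ≤ θ * ∫ ω, Y 0 ω ∂P := mul_le_mul_of_nonpos_left hx hθ.le
          _ = Real.log (Real.exp (θ * ∫ ω, Y 0 ω ∂P)) := (Real.log_exp _).symm
          _ ≤ Real.log (mgf (Y 0) P θ) := Real.log_le_log (Real.exp_pos _) hjensen
          _ = cgf (Y 0) P θ := rfl
      have h6 : (0:ℝ) ≤ -((n:ℝ) * (θ * x - cgf (Y 0) P θ)) := by nlinarith
      calc P _ ≤ 1 := prob_le_one
        _ ≤ ENNReal.ofReal (Real.exp (-((n:ℝ) * (θ * x - cgf (Y 0) P θ)))) := by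
            rw [← ENNReal.ofReal_one]
            exact ENNReal.ofReal_le_ofReal (Real.one_le_exp h6)

/-- **Chernoff upper bound.** For every `x ≥ E[X₁]` and every `n ≥ 1`,
`P[Sₙ/n ≥ x] ≤ exp(-n Γ*(x))`, with the convention `exp(-∞) = 0`. -/
theorem chernoff_upper_bound
    {Ω : Type*} [MeasurableSpace Ω] (P : Measure Ω) [IsProbabilityMeasure P]
    (X : ℕ → Ω → ℝ)
    (hindep : iIndepFun X P)
    (hident : ∀ i, IdentDistrib (X i) (X 0) P P)
    (hint : Integrable (X 0) P)
    (x : ℝ) (hx : ∫ ω, X 0 ω ∂P ≤ x)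
    (n : ℕ) (hn : 1 ≤ n) :
    P {ω | x ≤ (∑ i ∈ Finset.range n, X i ω) / n}
      ≤ EReal.exp (- (((n : ℝ) : EReal) * cramerTransform P (X 0) x)) := by
  classical
  set Y : ℕ → Ω → ℝ := fun i => ((hident i).aemeasurable_fst).mk (X i) with hY_def
  have hXY : ∀ i, X i =ᵐ[P] Y i := fun i => ((hident i).aemeasurable_fst).ae_eq_mk
  have hYmeas : ∀ i, Measurable (Y i) := fun i => ((hident i).aemeasurable_fst).measurable_mk
  have hindepY := iIndepFun_congr_ae' hindep hXY
  have hidentY : ∀ i, IdentDistrib (Y i) (Y 0) P P := fun i =>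
    ⟨(hYmeas i).aemeasurable, (hYmeas 0).aemeasurable, by
      rw [← Measure.map_congr (hXY i), ← Measure.map_congr (hXY 0)]
      exact (hident i).map_eq⟩
  have hintY : Integrable (Y 0) P := hint.congr (hXY 0)
  have hxY : ∫ ω, Y 0 ω ∂P ≤ x := by rwa [← integral_congr_ae (hXY 0)]
  have hsetEq : P {ω | x ≤ (∑ i ∈ Finset.range n, X i ω) / n}
      = P {ω | x ≤ (∑ i ∈ Finset.range n, Y i ω) / n} := by
    apply measure_congr
    rw [eventuallyEq_set]
    filter_upwards [ae_all_iff.2 hXY] with ω hω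
    have hsum : (∑ i ∈ Finset.range n, X i ω) = ∑ i ∈ Finset.range n, Y i ω :=
      Finset.sum_congr rfl fun i _ => hω i
    simp only [Set.mem_setOf_eq, hsum]
  have hcgfEq : ∀ θ, cgfE P (X 0) θ = cgfE P (Y 0) θ := fun θ => by
    simp only [cgfE]
    congr 1
    apply lintegral_congr_ae
    filter_upwards [hXY 0] with ω h
    rw [h]
  have hcramer : cramerTransform P (X 0) x = cramerTransform P (Y 0) x := by
    simp only [cramerTransform, hcgfEq]
  rw [hsetEq, hcramer]
  have key := chernoff_pointwise' P Y hYmeas hindepY hidentY hintY x hxY n hn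
  have hnpos : (0:EReal) < ((n : ℝ) : EReal) := by
    exact_mod_cast (by exact_mod_cast hn : (0:ℝ) < n)
  have hnne : ((n : ℝ) : EReal) ≠ ⊤ := EReal.coe_ne_top _
  conv_lhs => rw [← ENNReal.exp_log (P {ω | x ≤ (∑ i ∈ Finset.range n, Y i ω) / n})]
  rw [EReal.exp_le_exp_iff]
  apply EReal.le_neg_of_le_neg
  rw [mul_comm, ← EReal.le_div_iff_mul_le hnpos hnne]
  simp only [cramerTransform]
  apply iSup_le
  intro θ
  rw [EReal.le_div_iff_mul_le hnpos hnne, mul_comm]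
  apply EReal.le_neg_of_le_neg
  have := key θ
  rwa [← ENNReal.log_le_log_iff, EReal.log_exp] at this
end

section
/- (Upper bound in Varadhan's formula for bounded functions, part (a) of the proof of Theorem 2.2.) Suppose the family (Z^ε)_{ε>0} satisfies the large deviations upper bound with speed ε and rate function I, i.e. limsup_{ε→0} ε ln P[Z^ε ∈ F] ≤ −inf_{x∈F} I(x) for every closed F ⊆ X. Then for every bounded continuous function φ : X → ℝ, limsup_{ε→0} ε ln E[exp(φ(Z^ε)/ε)] ≤ sup_{x∈X} [φ(x) − I(x)]. -/
open MeasureTheory ProbabilityTheory Filter Topology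

lemma vub_exists_step (a : ℕ → ℝ) : ∀ N, 1 ≤ N → ∀ t : ℝ, a 0 ≤ t → t ≤ a N →
    ∃ j, j < N ∧ a j ≤ t ∧ t ≤ a (j + 1) := by
  intro N
  induction N with
  | zero => omega
  | succ n ih =>
    intro _ t h0 h1
    by_cases hn : n = 0
    · exact ⟨0, by omega, h0, by simpa [hn] using h1⟩
    · by_cases ht : t ≤ a n
      · obtain ⟨j, hj, hj1, hj2⟩ := ih (by omega) t h0 ht
        exact ⟨j, by omega, hj1, hj2⟩
      · exact ⟨n, by omega, le_of_not_ge ht, h1⟩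

lemma vub_mul_add (ε u : ℝ) (hε : 0 < ε) (v : EReal) :
    (ε : EReal) * ((u : EReal) + v) = (ε : EReal) * (u : EReal) + (ε : EReal) * v := by
  induction v with
  | bot =>
      rw [EReal.add_bot, EReal.mul_bot_of_pos (by exact_mod_cast hε)]
      rw [← EReal.coe_mul, EReal.add_bot]
  | coe r =>
      rw [← EReal.coe_add, ← EReal.coe_mul, ← EReal.coe_mul, ← EReal.coe_mul, ← EReal.coe_add,
        mul_add]
  | top =>
      rw [EReal.coe_add_top, EReal.mul_top_of_pos (by exact_mod_cast hε)]
      rw [← EReal.coe_mul, EReal.coe_add_top]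

lemma vub_tendsto_mul_const (r : ℝ) :
    Filter.limsup (fun ε : ℝ => (ε : EReal) * (r : EReal)) (𝓝[>] (0:ℝ)) = 0 := by
  have h : Tendsto (fun ε : ℝ => (ε : EReal) * (r : EReal)) (𝓝[>] (0:ℝ)) (𝓝 0) := by
    have h1 : Tendsto (fun ε : ℝ => ε * r) (𝓝[>] (0:ℝ)) (𝓝 0) :=
      ((continuous_mul_right r).tendsto' 0 0 (by simp)).mono_left nhdsWithin_le_nhds
    have h2 := (continuous_coe_real_ereal.tendsto 0).comp h1
    simpa [Function.comp_def, EReal.coe_mul] using h2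
  exact h.limsup_eq

lemma vub_limsup_sup' {α ι : Type*} (l : Filter α) [l.NeBot] (s : Finset ι) (hs : s.Nonempty)
    (v : ι → α → EReal) :
    Filter.limsup (fun t => s.sup' hs (fun j => v j t)) l
      ≤ s.sup' hs (fun j => Filter.limsup (v j) l) := by
  induction hs using Finset.Nonempty.cons_induction with
  | singleton a => simp only [Finset.sup'_singleton]; exact le_rfl
  | cons a s ha hs ih =>
      simp only [Finset.sup'_cons hs]
      calc Filter.limsup (fun t => max (v a t) (s.sup' hs fun j => v j t)) l
          = max (Filter.limsup (v a) l) (Filter.limsup (fun t => s.sup' hs fun j => v j t) l) :=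
            limsup_max
        _ ≤ _ := max_le_max le_rfl ih


open ENNReal in
lemma vub_limsup_log_sum_le (N : ℕ) (hN : 0 < N) (u : ℕ → ℝ → ℝ≥0∞) (b : EReal)
    (h : ∀ j < N, Filter.limsup (fun ε : ℝ => (ε : EReal) * ENNReal.log (u j ε)) (𝓝[>] (0:ℝ)) ≤ b) :
    Filter.limsup (fun ε : ℝ => (ε : EReal) * ENNReal.log (∑ j ∈ Finset.range N, u j ε))
      (𝓝[>] (0:ℝ)) ≤ b := by
  have hne : (Finset.range N).Nonempty := by
    rw [Finset.nonempty_range_iff]; omega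
  set c : EReal := ENNReal.log (N : ℝ≥0∞) with hc
  have hcbot : c ≠ ⊥ := by
    simp only [hc, ne_eq, ENNReal.log_eq_bot_iff, Nat.cast_eq_zero]; omega
  have hctop : c ≠ ⊤ := by
    simp only [hc, ne_eq, ENNReal.log_eq_top_iff]
    exact ENNReal.natCast_ne_top N
  set r : ℝ := c.toReal with hr
  have hcr : c = (r : EReal) := (EReal.coe_toReal hctop hcbot).symm
  have ev : ∀ ε ∈ Set.Ioi (0:ℝ),
      (ε : EReal) * ENNReal.log (∑ j ∈ Finset.range N, u j ε)
        ≤ (ε : EReal) * (r : EReal)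
          + (Finset.range N).sup' hne (fun j => (ε : EReal) * ENNReal.log (u j ε)) := by
    intro ε hε
    have hεpos : (0:ℝ) < ε := hε
    have hsum : ∑ j ∈ Finset.range N, u j ε
        ≤ (N : ℝ≥0∞) * (Finset.range N).sup' hne (fun j => u j ε) := by
      have := Finset.sum_le_card_nsmul (Finset.range N) (fun j => u j ε)
        ((Finset.range N).sup' hne (fun j => u j ε)) (fun x hx => Finset.le_sup' (fun j => u j ε) hx)
      simpa [Finset.card_range, nsmul_eq_mul] using this
    calc (ε : EReal) * ENNReal.log (∑ j ∈ Finset.range N, u j ε)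
        ≤ (ε : EReal) * ENNReal.log ((N : ℝ≥0∞) * (Finset.range N).sup' hne (fun j => u j ε)) :=
          mul_le_mul_of_nonneg_left (ENNReal.log_monotone hsum) (by exact_mod_cast hεpos.le)
      _ = (ε : EReal) * ((r : EReal)
            + ENNReal.log ((Finset.range N).sup' hne (fun j => u j ε))) := by
          rw [ENNReal.log_mul_add, ← hcr]
      _ = (ε : EReal) * (r : EReal)
            + (ε : EReal) * ENNReal.log ((Finset.range N).sup' hne (fun j => u j ε)) :=
          vub_mul_add ε r hεpos _
      _ = (ε : EReal) * (r : EReal)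
            + (ε : EReal) * (Finset.range N).sup' hne (fun j => ENNReal.log (u j ε)) := by
          rw [Finset.comp_sup'_eq_sup'_comp hne ENNReal.log
            (fun x y => ENNReal.log_monotone.map_sup x y)]
          rfl
      _ = (ε : EReal) * (r : EReal)
            + (Finset.range N).sup' hne (fun j => (ε : EReal) * ENNReal.log (u j ε)) := by
          have hmono : Monotone (fun x : EReal => (ε : EReal) * x) :=
            fun x y hxy => mul_le_mul_of_nonneg_left hxy (by exact_mod_cast hεpos.le)
          rw [Finset.comp_sup'_eq_sup'_comp hne (fun x : EReal => (ε : EReal) * x)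
            (fun x y => hmono.map_sup x y)]
          rfl
  have h1 : Filter.limsup (fun ε : ℝ => (ε : EReal) * ENNReal.log (∑ j ∈ Finset.range N, u j ε))
      (𝓝[>] (0:ℝ))
      ≤ Filter.limsup (fun ε : ℝ => (ε : EReal) * (r : EReal)
          + (Finset.range N).sup' hne (fun j => (ε : EReal) * ENNReal.log (u j ε)))
        (𝓝[>] (0:ℝ)) :=
    Filter.limsup_le_limsup (eventually_mem_nhdsWithin.mono ev)
  have hA : Filter.limsup (fun ε : ℝ => (ε : EReal) * (r : EReal)) (𝓝[>] (0:ℝ)) = 0 :=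
    vub_tendsto_mul_const r
  have h2 := EReal.limsup_add_le
    (u := fun ε : ℝ => (ε : EReal) * (r : EReal))
    (v := fun ε : ℝ => (Finset.range N).sup' hne (fun j => (ε : EReal) * ENNReal.log (u j ε)))
    (f := 𝓝[>] (0:ℝ))
    (by rw [hA]; exact Or.inl (by simp))
    (by rw [hA]; exact Or.inl (by simp))
  rw [hA, zero_add] at h2
  refine h1.trans (h2.trans ?_)
  refine (vub_limsup_sup' _ _ hne _).trans ?_
  exact Finset.sup'_le _ _ (fun j hj => h j (Finset.mem_range.1 hj))

/-- **Upper bound in Varadhan's formula for bounded continuous functions.** If `(Z^ε)` satisfies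
the large deviations upper bound with speed `ε` and rate function `I`, then for every bounded
continuous `φ`, `limsup_{ε→0} ε ln E[exp(φ(Z^ε)/ε)] ≤ sup_x [φ(x) - I(x)]`. -/
theorem varadhan_upper_bound_bounded
    {Ω : Type*} [MeasurableSpace Ω] (P : Measure Ω) [IsProbabilityMeasure P]
    {𝒳 : Type*} [TopologicalSpace 𝒳]
    (Z : ℝ → Ω → 𝒳) (I : 𝒳 → EReal)
    (hI0 : ∀ x, 0 ≤ I x) (hIlsc : LowerSemicontinuous I)
    (hupper : ∀ F : Set 𝒳, IsClosed F →
      limsup (fun ε : ℝ => (ε : EReal) * ENNReal.log (P (Z ε ⁻¹' F))) (𝓝[>] (0 : ℝ))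
        ≤ - ⨅ x ∈ F, I x)
    (φ : 𝒳 → ℝ) (hφ : Continuous φ) (C : ℝ) (hbdd : ∀ x, |φ x| ≤ C) :
    limsup
      (fun ε : ℝ => (ε : EReal) *
        ENNReal.log (∫⁻ ω, ENNReal.ofReal (Real.exp (φ (Z ε ω) / ε)) ∂P))
      (𝓝[>] (0 : ℝ)) ≤ ⨆ x : 𝒳, ((φ x : ℝ) : EReal) - I x := by
  have hΩ : Nonempty Ω := by
    by_contra h
    rw [not_nonempty_iff] at h
    have h1 : P Set.univ = 1 := measure_univ
    rw [Set.univ_eq_empty_iff.2 h, measure_empty] at h1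
    exact zero_ne_one h1
  have hX : Nonempty 𝒳 := ⟨Z 1 (Classical.choice hΩ)⟩
  obtain ⟨x₀⟩ := hX
  have hC : (0:ℝ) ≤ C := (abs_nonneg _).trans (hbdd x₀)
  set S : EReal := ⨆ x : 𝒳, ((φ x : ℝ) : EReal) - I x with hS
  have hIbot : ∀ x, I x ≠ ⊥ := fun x =>
    (((EReal.bot_lt_coe 0).trans_le (by simpa using hI0 x))).ne'
  have hSle : S ≤ (C : EReal) := by
    refine iSup_le fun x => ?_
    calc ((φ x : ℝ) : EReal) - I x ≤ ((φ x : ℝ) : EReal) - 0 :=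
          EReal.sub_le_sub le_rfl (hI0 x)
      _ = ((φ x : ℝ) : EReal) := by rw [sub_zero]
      _ ≤ (C : EReal) := EReal.coe_le_coe_iff.2 ((le_abs_self _).trans (hbdd x))
  have hStop : S ≠ ⊤ := fun h => (EReal.coe_ne_top C) (top_le_iff.1 (h ▸ hSle))
  have hI1 : ∃ x, I x < 1 := by
    by_contra hcon
    push_neg at hcon
    have h0 := hupper Set.univ isClosed_univ
    have heq : (fun ε : ℝ => (ε : EReal) * ENNReal.log (P (Z ε ⁻¹' Set.univ)))
        = fun _ : ℝ => (0 : EReal) := by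
      funext ε; simp
    rw [heq, limsup_const] at h0
    have h1 : (⨅ x ∈ Set.univ, I x) ≤ 0 := by
      have := EReal.neg_le_neg_iff.1 (by simpa using h0 : -(0:EReal) ≤ - ⨅ x ∈ Set.univ, I x)
      simpa using this
    have h2 : (1 : EReal) ≤ ⨅ x ∈ Set.univ, I x :=
      le_iInf fun x => le_iInf fun _ => hcon x
    exact absurd (h2.trans h1)
      (not_le.2 (by exact_mod_cast (zero_lt_one : (0:ℝ) < 1)))
  obtain ⟨x₁, hx₁⟩ := hI1
  have hSbot : S ≠ ⊥ := by
    intro h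
    have hle : ((φ x₁ : ℝ) : EReal) - I x₁ ≤ S :=
      le_iSup (fun x => ((φ x : ℝ) : EReal) - I x) x₁
    rw [h, le_bot_iff] at hle
    have hItop : I x₁ ≠ ⊤ := hx₁.ne_top
    rw [← EReal.coe_toReal hItop (hIbot x₁), ← EReal.coe_sub] at hle
    exact EReal.coe_ne_bot _ hle
  set s : ℝ := S.toReal with hs
  have hSs : S = (s : EReal) := (EReal.coe_toReal hStop hSbot).symm
  suffices hmain : ∀ η : ℝ, 0 < η →
      limsup
        (fun ε : ℝ => (ε : EReal) *
          ENNReal.log (∫⁻ ω, ENNReal.ofReal (Real.exp (φ (Z ε ω) / ε)) ∂P))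
        (𝓝[>] (0 : ℝ)) ≤ (s : EReal) + (η : EReal) by
    by_contra hcon
    rw [not_le, hSs] at hcon
    obtain ⟨ρ, hρ1, hρ2⟩ := EReal.lt_iff_exists_real_btwn.1 hcon
    have hpos : (0:ℝ) < ρ - s := by
      have := EReal.coe_lt_coe_iff.1 hρ1; linarith
    have := hmain (ρ - s) hpos
    rw [← EReal.coe_add] at this
    have heq : s + (ρ - s) = ρ := by ring
    rw [heq] at this
    exact absurd (hρ2.trans_le this) (lt_irrefl _)
  intro η hη
  obtain ⟨N₀, hN₀⟩ := exists_nat_gt (2 * C / η)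
  set N : ℕ := max N₀ 1 with hN
  have hN1 : 1 ≤ N := le_max_right _ _
  have hNpos : (0:ℝ) < (N:ℝ) := by exact_mod_cast hN1
  have hstep : 2 * C / (N:ℝ) ≤ η := by
    rw [div_le_iff₀ hNpos]
    have h1 : 2 * C / η < (N:ℝ) := lt_of_lt_of_le hN₀ (by exact_mod_cast le_max_left N₀ 1)
    rw [div_lt_iff₀ hη] at h1
    linarith
  obtain ⟨a, ha0, haN, hastep⟩ :
      ∃ a : ℕ → ℝ, a 0 = -C ∧ a N = C ∧ ∀ j, a (j+1) = a j + 2*C/(N:ℝ) := by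
    refine ⟨fun j => -C + j * (2 * C / (N:ℝ)), by simp, ?_, ?_⟩
    · field_simp
      ring
    · intro j; push_cast; ring
  set F : ℕ → Set 𝒳 := fun j => {x | a j ≤ φ x ∧ φ x ≤ a (j+1)} with hF
  have hFclosed : ∀ j, IsClosed (F j) := fun j =>
    IsClosed.inter (isClosed_le continuous_const hφ) (isClosed_le hφ continuous_const)
  have hcover : ∀ x : 𝒳, ∃ j, j < N ∧ x ∈ F j := by
    intro x
    obtain ⟨j, hj, h1, h2⟩ := vub_exists_step a N hN1 (φ x)
      (by rw [ha0]; linarith [(abs_le.1 (hbdd x)).1])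
      (by rw [haN]; exact (abs_le.1 (hbdd x)).2)
    exact ⟨j, hj, h1, h2⟩
  have hint : ∀ ε : ℝ, 0 < ε →
      (∫⁻ ω, ENNReal.ofReal (Real.exp (φ (Z ε ω) / ε)) ∂P)
        ≤ ∑ j ∈ Finset.range N, ENNReal.ofReal (Real.exp (a (j+1) / ε)) * P (Z ε ⁻¹' F j) := by
    intro ε hε
    calc ∫⁻ ω, ENNReal.ofReal (Real.exp (φ (Z ε ω) / ε)) ∂P
        ≤ ∫⁻ ω, ∑ j ∈ Finset.range N, (toMeasurable P (Z ε ⁻¹' F j)).indicator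
            (fun _ => ENNReal.ofReal (Real.exp (a (j+1) / ε))) ω ∂P := by
          refine lintegral_mono fun ω => ?_
          obtain ⟨j, hjN, hj⟩ := hcover (Z ε ω)
          refine le_trans ?_ (Finset.single_le_sum
            (f := fun j => (toMeasurable P (Z ε ⁻¹' F j)).indicator
              (fun _ => ENNReal.ofReal (Real.exp (a (j+1) / ε))) ω)
            (fun i _ => zero_le) (Finset.mem_range.2 hjN))
          have hmem : ω ∈ toMeasurable P (Z ε ⁻¹' F j) := subset_toMeasurable _ _ hj
          show ENNReal.ofReal (Real.exp (φ (Z ε ω) / ε)) ≤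
            (toMeasurable P (Z ε ⁻¹' F j)).indicator
              (fun _ => ENNReal.ofReal (Real.exp (a (j+1) / ε))) ω
          rw [Set.indicator_of_mem hmem]
          refine ENNReal.ofReal_le_ofReal (Real.exp_le_exp.2 ?_)
          gcongr
          exact hj.2
      _ = ∑ j ∈ Finset.range N,
            ENNReal.ofReal (Real.exp (a (j+1) / ε)) * P (toMeasurable P (Z ε ⁻¹' F j)) := by
          rw [lintegral_finset_sum _
            (fun j _ => measurable_const.indicator (measurableSet_toMeasurable _ _))]
          exact Finset.sum_congr rfl fun j _ =>
            lintegral_indicator_const (measurableSet_toMeasurable _ _) _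
      _ = ∑ j ∈ Finset.range N,
            ENNReal.ofReal (Real.exp (a (j+1) / ε)) * P (Z ε ⁻¹' F j) :=
          Finset.sum_congr rfl fun j _ => by rw [measure_toMeasurable]
  have hls1 : limsup
      (fun ε : ℝ => (ε : EReal) *
        ENNReal.log (∫⁻ ω, ENNReal.ofReal (Real.exp (φ (Z ε ω) / ε)) ∂P)) (𝓝[>] (0:ℝ))
      ≤ limsup (fun ε : ℝ => (ε : EReal) * ENNReal.log
          (∑ j ∈ Finset.range N, ENNReal.ofReal (Real.exp (a (j+1) / ε)) * P (Z ε ⁻¹' F j)))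
        (𝓝[>] (0:ℝ)) :=
    limsup_le_limsup (eventually_mem_nhdsWithin.mono fun ε hε =>
      mul_le_mul_of_nonneg_left (ENNReal.log_monotone (hint ε hε))
        (by exact_mod_cast (le_of_lt hε)))
  refine hls1.trans ?_
  refine vub_limsup_log_sum_le N (by omega)
    (fun j ε => ENNReal.ofReal (Real.exp (a (j+1) / ε)) * P (Z ε ⁻¹' F j)) _
    (fun j hjN => ?_)
  have hev : ∀ ε ∈ Set.Ioi (0:ℝ),
      (ε : EReal) * ENNReal.log (ENNReal.ofReal (Real.exp (a (j+1) / ε)) * P (Z ε ⁻¹' F j))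
        = ((a (j+1) : ℝ) : EReal) + (ε : EReal) * ENNReal.log (P (Z ε ⁻¹' F j)) := by
    intro ε hε
    have hεpos : (0:ℝ) < ε := hε
    rw [ENNReal.log_mul_add, ENNReal.log_ofReal_of_pos (Real.exp_pos _), Real.log_exp,
      vub_mul_add ε _ hεpos]
    congr 1
    rw [← EReal.coe_mul, mul_div_cancel₀ _ (ne_of_gt hεpos)]
  have hcg : limsup (fun ε : ℝ => (ε : EReal) *
        ENNReal.log (ENNReal.ofReal (Real.exp (a (j+1) / ε)) * P (Z ε ⁻¹' F j))) (𝓝[>] (0:ℝ))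
      = limsup (fun ε : ℝ =>
          ((a (j+1) : ℝ) : EReal) + (ε : EReal) * ENNReal.log (P (Z ε ⁻¹' F j)))
        (𝓝[>] (0:ℝ)) :=
    limsup_congr (eventually_mem_nhdsWithin.mono hev)
  have hadd := EReal.limsup_add_le
    (u := fun _ : ℝ => ((a (j+1) : ℝ) : EReal))
    (v := fun ε : ℝ => (ε : EReal) * ENNReal.log (P (Z ε ⁻¹' F j)))
    (f := 𝓝[>] (0:ℝ))
    (by rw [limsup_const]; exact Or.inl (EReal.coe_ne_bot _))
    (by rw [limsup_const]; exact Or.inl (EReal.coe_ne_top _))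
  rw [limsup_const] at hadd
  have hup := hupper (F j) (hFclosed j)
  refine (le_of_eq hcg).trans (hadd.trans ((add_le_add_right hup _).trans ?_))
  rcases Set.eq_empty_or_nonempty (F j) with hFe | ⟨x₂, hx₂⟩
  · rw [hFe]
    simp [EReal.add_bot]
  · have hkey : ∀ x ∈ F j, ((a (j+1) - (s + η) : ℝ) : EReal) ≤ I x := by
      intro x hx
      have h1 : a (j+1) ≤ φ x + η := by
        rw [hastep j]
        exact add_le_add hx.1 hstep
      have h2 : ((φ x - s : ℝ) : EReal) ≤ I x := by
        have h3 : ((φ x : ℝ) : EReal) - I x ≤ (s : EReal) := by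
          rw [← hSs]
          exact le_iSup (fun x => ((φ x : ℝ) : EReal) - I x) x
        have h4 : ((φ x : ℝ) : EReal) ≤ (s : EReal) + I x := by
          rwa [EReal.sub_le_iff_le_add (Or.inl (hIbot x)) (Or.inr (EReal.coe_ne_bot s))] at h3
        rw [EReal.coe_sub, EReal.sub_le_iff_le_add (Or.inl (EReal.coe_ne_bot s))
          (Or.inl (EReal.coe_ne_top s))]
        rwa [add_comm] at h4
      calc ((a (j+1) - (s + η) : ℝ) : EReal) ≤ ((φ x - s : ℝ) : EReal) :=
            EReal.coe_le_coe_iff.2 (by linarith)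
        _ ≤ I x := h2
    have hinf : ((a (j+1) - (s + η) : ℝ) : EReal) ≤ ⨅ x ∈ F j, I x :=
      le_iInf fun x => le_iInf fun hx => hkey x hx
    have hneg : (- ⨅ x ∈ F j, I x) ≤ ((-(a (j+1) - (s + η)) : ℝ) : EReal) := by
      rw [EReal.coe_neg]
      exact EReal.neg_le_neg_iff.2 hinf
    calc ((a (j+1) : ℝ) : EReal) + (- ⨅ x ∈ F j, I x)
        ≤ ((a (j+1) : ℝ) : EReal) + ((-(a (j+1) - (s + η)) : ℝ) : EReal) :=
          add_le_add_right hneg _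
      _ = ((s + η : ℝ) : EReal) := by
          rw [← EReal.coe_add]
          congr 1
          ring
      _ = (s : EReal) + (η : EReal) := EReal.coe_add _ _
end

section
/- (Lundberg's inequality for the ruin probability of a random walk.) Let (Zᵢ)_{i≥1} be i.i.d. real-valued random variables with E[Z₁] < 0, and suppose θ_L > 0 satisfies E[exp(θ_L Z₁)] = 1. Set Sₙ = Z₁ + ⋯ + Zₙ. Then for every x > 0, P[∃ n ≥ 1 : Sₙ > x] ≤ exp(−θ_L x). -/
open MeasureTheory ProbabilityTheory Filter Topology

private lemma iIndepFun_ae_congr' {Ω : Type*} [MeasurableSpace Ω] {P : Measure Ω}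
    {f g : ℕ → Ω → ℝ} (h : ∀ i, f i =ᵐ[P] g i)
    (hf : iIndepFun f P) :
    iIndepFun g P := by
  rw [iIndepFun_iff] at hf ⊢
  intro s f' H
  have H' : ∀ i ∈ s, ∃ A : Set ℝ, MeasurableSet A ∧ g i ⁻¹' A = f' i := H
  choose! A hA hA2 using H'
  have key : ∀ i ∈ s, (f' i : Set Ω) =ᵐ[P] f i ⁻¹' (A i) := by
    intro i hi
    rw [← hA2 i hi]
    filter_upwards [h i] with ω hω
    show (g i ω ∈ A i) = (f i ω ∈ A i)
    rw [hω]
  have h1 : (⋂ i ∈ s, f' i) =ᵐ[P] ⋂ i ∈ s, f i ⁻¹' A i := by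
    have hb : ∀ᵐ ω ∂P, ∀ i ∈ s, (f' i : Set Ω) ω = (f i ⁻¹' A i) ω :=
      (Filter.eventually_all_finset s).2 key
    filter_upwards [hb] with ω hω
    have hiff : ∀ i ∈ s, (ω ∈ f' i ↔ ω ∈ f i ⁻¹' A i) := fun i hi => iff_of_eq (hω i hi)
    show (ω ∈ ⋂ i ∈ s, f' i) = (ω ∈ ⋂ i ∈ s, f i ⁻¹' A i)
    rw [eq_iff_iff]
    simp only [Set.mem_iInter]
    exact ⟨fun hm i hi => (hiff i hi).1 (hm i hi), fun hm i hi => (hiff i hi).2 (hm i hi)⟩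
  rw [measure_congr h1, hf s (fun i hi => ⟨A i, hA i hi, rfl⟩)]
  exact Finset.prod_congr rfl fun i hi => (measure_congr (key i hi)).symm

private lemma lundberg_aux {Ω : Type*} [MeasurableSpace Ω] (P : Measure Ω)
    [IsProbabilityMeasure P] (Z : ℕ → Ω → ℝ)
    (hmeas : ∀ i, Measurable (Z i))
    (hindep : iIndepFun Z P)
    (θL : ℝ) (hθL : 0 < θL)
    (hexpint : ∀ i, Integrable (fun ω => Real.exp (θL * Z i ω)) P)
    (hadj : ∀ i, ∫ ω, Real.exp (θL * Z i ω) ∂P = 1)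
    (x : ℝ) (hx : 0 < x) :
    P {ω | ∃ n : ℕ, 1 ≤ n ∧ x < ∑ i ∈ Finset.range n, Z i ω}
      ≤ ENNReal.ofReal (Real.exp (-θL * x)) := by
  classical
  set W : ℕ → Ω → ℝ := fun i ω => Real.exp (θL * Z i ω) with hW
  have hWmeas : ∀ i, Measurable (W i) := fun i => ((hmeas i).const_mul θL).exp
  have hWindep : iIndepFun W P := by
    have := hindep.comp (fun _ (y : ℝ) => Real.exp (θL * y))
      (fun _ => (measurable_const.mul measurable_id).exp)
    exact this
  have hWint : ∀ i, Integrable (W i) P := hexpint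
  have hWpos : ∀ i ω, 0 < W i ω := fun i ω => Real.exp_pos _
  -- products over finsets
  have hprod : ∀ s : Finset ℕ,
      Integrable (∏ i ∈ s, W i) P ∧ integral P (∏ i ∈ s, W i) = 1 := by
    intro s
    induction s using Finset.cons_induction with
    | empty =>
      rw [Finset.prod_empty]
      exact ⟨integrable_const 1, by simp [Pi.one_def]⟩
    | cons a s ha ih =>
      have hind : IndepFun (∏ i ∈ s, W i) (W a) P :=
        hWindep.indepFun_finset_prod_of_notMem hWmeas ha
      constructor
      · rw [Finset.prod_cons, mul_comm]
        exact hind.integrable_mul ih.1 (hWint a)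
      · rw [Finset.prod_cons, mul_comm,
          hind.integral_mul_eq_mul_integral ih.1.aestronglyMeasurable (hWint a).aestronglyMeasurable, ih.2, one_mul]
        exact hadj a
  set f : ℕ → Ω → ℝ := fun n => ∏ i ∈ Finset.range (n + 1), W i with hf
  set 𝒢 := Filtration.natural Z (fun i => (hmeas i).stronglyMeasurable) with h𝒢
  have hZle : ∀ i n, i ≤ n → Measurable[𝒢 n] (Z i) := by
    intro i n hin
    apply Measurable.of_comap_le
    exact le_biSup (fun j => MeasurableSpace.comap (Z j) inferInstance) hin
  have hadp : ∀ n, StronglyMeasurable[𝒢 n] (f n) := by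
    intro n
    apply Measurable.stronglyMeasurable
    have hm : ∀ i ∈ Finset.range (n + 1), Measurable[𝒢 n] (W i) := fun i hi =>
      ((hZle i n (Nat.lt_succ_iff.mp (Finset.mem_range.mp hi))).const_mul θL).exp
    simpa only [← Finset.prod_apply] using Finset.measurable_prod (Finset.range (n + 1)) hm
  have hmart : Martingale f 𝒢 P := by
    constructor
    · exact hadp
    · intro i j hij
      set g : Ω → ℝ := ∏ k ∈ Finset.Ico (i + 1) (j + 1), W k with hg
      have hfj : f j = f i * g := by
        rw [hf, hg]
        exact (Finset.prod_range_mul_prod_Ico W (Nat.succ_le_succ hij)).symm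
      have hm₁le : (⨆ k ∈ {k | i < k}, MeasurableSpace.comap (Z k) inferInstance)
          ≤ (inferInstance : MeasurableSpace Ω) :=
        iSup₂_le fun k _ => (hmeas k).comap_le
      have hgmeas : StronglyMeasurable[⨆ k ∈ {k | i < k},
          MeasurableSpace.comap (Z k) inferInstance] g := by
        apply Measurable.stronglyMeasurable
        have hm : ∀ k ∈ Finset.Ico (i + 1) (j + 1), Measurable[⨆ k ∈ {k | i < k},
            MeasurableSpace.comap (Z k) inferInstance] (W k) := by
          intro k hk
          have hik : i < k := Nat.lt_of_succ_le (Finset.mem_Ico.mp hk).1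
          have hzk : Measurable[⨆ k ∈ {k | i < k},
              MeasurableSpace.comap (Z k) inferInstance] (Z k) :=
            Measurable.of_comap_le
              (le_biSup (fun j => MeasurableSpace.comap (Z j) inferInstance) hik)
          exact (hzk.const_mul θL).exp
        simpa only [← Finset.prod_apply] using
          Finset.measurable_prod (Finset.Ico (i + 1) (j + 1)) hm
      have hIndep2 : Indep (⨆ k ∈ {k | i < k}, MeasurableSpace.comap (Z k) inferInstance)
          (𝒢 i) P := by
        have : Disjoint {k | i < k} {k | k ≤ i} := by
          rw [Set.disjoint_left]
          intro k hk hk'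
          exact absurd (show k ≤ i from hk') (not_le.mpr (show i < k from hk))
        exact indep_iSup_of_disjoint (fun k => (hmeas k).comap_le) hindep this
      have hcond_g : P[g|𝒢 i] =ᵐ[P] fun _ => ∫ ω, g ω ∂P :=
        condExp_indep_eq hm₁le (𝒢.le i) hgmeas hIndep2
      have hfj_int : Integrable (f i * g) P := by rw [← hfj]; exact (hprod _).1
      calc P[f j|𝒢 i] = P[f i * g|𝒢 i] := by rw [hfj]
        _ =ᵐ[P] f i * P[g|𝒢 i] :=
          condExp_mul_of_stronglyMeasurable_left (hadp i) hfj_int (hprod _).1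
        _ =ᵐ[P] f i := by
          have hg1 : ∫ ω, g ω ∂P = 1 := (hprod (Finset.Ico (i + 1) (j + 1))).2
          filter_upwards [hcond_g] with ω hω
          simp only [Pi.mul_apply, hω, hg1, mul_one]
  -- Doob's maximal inequality
  have hnonneg : 0 ≤ f := by
    intro n ω
    simp only [hf, Finset.prod_apply, Pi.zero_apply]
    exact Finset.prod_nonneg fun i _ => (hWpos i ω).le
  set ε : NNReal := Real.toNNReal (Real.exp (θL * x)) with hε
  let B : ℕ → Set Ω := fun N => {ω | (ε : ℝ) ≤
    (Finset.range (N + 1)).sup' Finset.nonempty_range_add_one fun k => f k ω}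
  have hBmem : ∀ N ω, ω ∈ B N ↔ (ε : ℝ) ≤
      (Finset.range (N + 1)).sup' Finset.nonempty_range_add_one fun k => f k ω :=
    fun N ω => Iff.rfl
  have hεcoe : (ε : ℝ) = Real.exp (θL * x) := Real.coe_toNNReal _ (Real.exp_pos _).le
  have hBbound : ∀ N, P (B N) ≤ (ε : ENNReal)⁻¹ := by
    intro N
    have h1 := maximal_ineq hmart.submartingale hnonneg (ε := ε) N
    have h2 : ∫ ω in B N, f N ω ∂P ≤ ∫ ω, f N ω ∂P :=
      setIntegral_le_integral (hprod _).1 (ae_of_all _ fun ω => hnonneg N ω)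
    have hint1 : ∫ ω, f N ω ∂P = 1 := (hprod (Finset.range (N + 1))).2
    have h3 : (ε : ENNReal) • P (B N) ≤ 1 := by
      refine h1.trans ?_
      refine (ENNReal.ofReal_le_ofReal h2).trans ?_
      rw [hint1]
      simp
    rw [ENNReal.le_inv_iff_mul_le, mul_comm]
    exact h3
  have hBmono : Monotone B := by
    intro N M hNM ω hω
    rw [hBmem] at hω ⊢
    refine le_trans hω ?_
    apply Finset.sup'_le
    intro k hk
    exact Finset.le_sup' (fun k => f k ω)
      (Finset.mem_range.mpr (lt_of_lt_of_le (Finset.mem_range.mp hk) (by omega)))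
  have hsubset : {ω | ∃ n : ℕ, 1 ≤ n ∧ x < ∑ i ∈ Finset.range n, Z i ω} ⊆ ⋃ N, B N := by
    intro ω hω
    obtain ⟨n, hn1, hnx⟩ := hω
    refine Set.mem_iUnion.mpr ⟨n - 1, (hBmem _ _).mpr ?_⟩
    have hfval : f (n - 1) ω = Real.exp (θL * ∑ i ∈ Finset.range n, Z i ω) := by
      simp only [hf, Finset.prod_apply, hW]
      rw [Nat.sub_add_cancel hn1, ← Real.exp_sum, ← Finset.mul_sum]
    have hle : (ε : ℝ) ≤ f (n - 1) ω := by
      rw [hεcoe, hfval]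
      exact Real.exp_le_exp.mpr (mul_le_mul_of_nonneg_left hnx.le hθL.le)
    refine le_trans hle ?_
    exact Finset.le_sup' (fun k => f k ω)
      (Finset.mem_range.mpr (Nat.lt_succ_self _))
  calc P {ω | ∃ n : ℕ, 1 ≤ n ∧ x < ∑ i ∈ Finset.range n, Z i ω}
      ≤ P (⋃ N, B N) := measure_mono hsubset
    _ = ⨆ N, P (B N) := hBmono.measure_iUnion
    _ ≤ (ε : ENNReal)⁻¹ := iSup_le hBbound
    _ = ENNReal.ofReal (Real.exp (-θL * x)) := by
        have : (ε : ENNReal) = ENNReal.ofReal (Real.exp (θL * x)) := rfl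
        rw [this, ← ENNReal.ofReal_inv_of_pos (Real.exp_pos _), ← Real.exp_neg, neg_mul]

/-- **Lundberg's inequality** for the ruin probability of a random walk. If `(Zᵢ)` are i.i.d. with
`E[Z₁] < 0` and `θ_L > 0` satisfies `E[exp(θ_L Z₁)] = 1`, then for every `x > 0`,
`P[∃ n ≥ 1 : Sₙ > x] ≤ exp(-θ_L x)`. -/
theorem lundberg_inequality
    {Ω : Type*} [MeasurableSpace Ω] (P : Measure Ω) [IsProbabilityMeasure P]
    (Z : ℕ → Ω → ℝ)
    (hindep : iIndepFun Z P)
    (hident : ∀ i, IdentDistrib (Z i) (Z 0) P P)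
    (hint : Integrable (Z 0) P)
    (hmean : ∫ ω, Z 0 ω ∂P < 0)
    (θL : ℝ) (hθL : 0 < θL)
    (hexpint : Integrable (fun ω => Real.exp (θL * Z 0 ω)) P)
    (hadj : ∫ ω, Real.exp (θL * Z 0 ω) ∂P = 1)
    (x : ℝ) (hx : 0 < x) :
    P {ω | ∃ n : ℕ, 1 ≤ n ∧ x < ∑ i ∈ Finset.range n, Z i ω}
      ≤ ENNReal.ofReal (Real.exp (-θL * x)) := by
  classical
  have hae : ∀ i, AEMeasurable (Z i) P := fun i => (hident i).aemeasurable_fst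
  set Z' : ℕ → Ω → ℝ := fun i => (hae i).mk (Z i) with hZ'
  have hZ'meas : ∀ i, Measurable (Z' i) := fun i => (hae i).measurable_mk
  have heq : ∀ i, Z i =ᵐ[P] Z' i := fun i => (hae i).ae_eq_mk
  have hindep' : iIndepFun Z' P := iIndepFun_ae_congr' heq hindep
  have hident' : ∀ i, IdentDistrib (Z' i) (Z 0) P P := by
    intro i
    have h1 : IdentDistrib (Z' i) (Z i) P P :=
      ⟨(hZ'meas i).aemeasurable, hae i, (Measure.map_congr (heq i)).symm⟩
    exact h1.trans (hident i)
  have hexpint' : ∀ i, Integrable (fun ω => Real.exp (θL * Z' i ω)) P := by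
    intro i
    have := (hident' i).comp (u := fun y : ℝ => Real.exp (θL * y))
      ((measurable_const.mul measurable_id).exp)
    exact this.integrable_iff.mpr hexpint
  have hadj' : ∀ i, ∫ ω, Real.exp (θL * Z' i ω) ∂P = 1 := by
    intro i
    have := (hident' i).comp (u := fun y : ℝ => Real.exp (θL * y))
      ((measurable_const.mul measurable_id).exp)
    have h2 : ∫ ω, Real.exp (θL * Z' i ω) ∂P = ∫ ω, Real.exp (θL * Z 0 ω) ∂P :=
      this.integral_eq
    rw [h2]
    exact hadj
  have hsets : {ω | ∃ n : ℕ, 1 ≤ n ∧ x < ∑ i ∈ Finset.range n, Z i ω}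
      =ᵐ[P] {ω | ∃ n : ℕ, 1 ≤ n ∧ x < ∑ i ∈ Finset.range n, Z' i ω} := by
    have hall : ∀ᵐ ω ∂P, ∀ i, Z i ω = Z' i ω := ae_all_iff.mpr heq
    filter_upwards [hall] with ω hω
    simp only [Set.mem_setOf_eq, eq_iff_iff]
    constructor <;> rintro ⟨n, hn1, hnx⟩ <;> refine ⟨n, hn1, ?_⟩
    · rwa [Finset.sum_congr rfl fun i _ => (hω i).symm]
    · rwa [Finset.sum_congr rfl fun i _ => hω i]
  rw [measure_congr hsets]
  exact lundberg_aux P Z' hZ'meas hindep' θL hθL hexpint' hadj' x hx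
end

section
/- (Analytic content of Theorem 3.1: the exponent with investment and its comparison with the Lundberg exponent.) Let Y be a positive random variable with E[Y] > 0, and θ̄ ∈ (0, ∞] such that γ_Y(θ) := E[exp(θY)] − 1 < ∞ for all θ ∈ [0, θ̄) and γ_Y(θ) → ∞ as θ ↗ θ̄. Let λ, p, σ > 0 and b ∈ ℝ with b ≠ 0, and assume the net profit condition p > λ E[Y]. Then: (i) there exists a unique θ* ∈ (0, θ̄) such that γ_Y(θ*) = p θ*/λ + b²/(2σ²λ); (ii) there exists a unique θ_L ∈ (0, θ̄) such that γ_Y(θ_L) = p θ_L/λ; and (iii) θ* > θ_L. -/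
open MeasureTheory ProbabilityTheory Filter Topology

private lemma exp_strict_ineq' {u v a b : ℝ} (huv : u ≠ v) (ha : 0 < a) (hb : 0 < b)
    (hab : a + b = 1) : Real.exp (a * u + b * v) < a * Real.exp u + b * Real.exp v := by
  simpa [smul_eq_mul] using
    strictConvexOn_exp.2 (Set.mem_univ u) (Set.mem_univ v) huv ha hb hab

private lemma exp_sub_one_le_mul' (x : ℝ) : Real.exp x - 1 ≤ x * Real.exp x := by
  have h2 : Real.exp (-x) * Real.exp x = 1 := by rw [← Real.exp_add]; simp
  have h3 : (-x + 1) * Real.exp x ≤ Real.exp (-x) * Real.exp x :=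
    mul_le_mul_of_nonneg_right (Real.add_one_le_exp _) (Real.exp_pos x).le
  nlinarith [h3, h2]

private lemma crossing_aux' (f : ℝ → ℝ) (dom : Set ℝ) (c d : ℝ)
    (hdom : ∀ ⦃x y : ℝ⦄, y ∈ dom → 0 ≤ x → x ≤ y → x ∈ dom)
    (hsc : ∀ ⦃y b : ℝ⦄, y ∈ dom → 0 < y → 0 < b → b < 1 → f (b * y) < b * f y)
    (hcont : ∀ ⦃y⦄, y ∈ dom → ContinuousOn f (Set.Icc 0 y))
    (hd : 0 ≤ d)
    (hsmall : ∀ e, 0 < e → ∃ θ, 0 < θ ∧ θ < e ∧ θ ∈ dom ∧ f θ < c * θ)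
    (hbig : ∃ θ, 0 < θ ∧ θ ∈ dom ∧ c * θ + d < f θ) :
    ∃! θ, 0 < θ ∧ θ ∈ dom ∧ f θ = c * θ + d := by
  have uniq : ∀ r₁ r₂ : ℝ, (0 < r₁ ∧ r₁ ∈ dom ∧ f r₁ = c * r₁ + d) →
      (0 < r₂ ∧ r₂ ∈ dom ∧ f r₂ = c * r₂ + d) → ¬ (r₁ < r₂) := by
    rintro r₁ r₂ ⟨h1, hd1, he1⟩ ⟨h2, hd2, he2⟩ hlt
    have hb : 0 < r₁ / r₂ := div_pos h1 h2
    have hb1 : r₁ / r₂ < 1 := (div_lt_one h2).2 hlt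
    have hkey := hsc hd2 h2 hb hb1
    rw [div_mul_cancel₀ _ h2.ne', he1, he2] at hkey
    have h3 : r₁ / r₂ * (c * r₂ + d) = c * r₁ + r₁ / r₂ * d := by field_simp
    rw [h3] at hkey
    nlinarith [hkey, hb1, hd, hb]
  obtain ⟨θ₂, hθ₂0, hθ₂dom, hθ₂big⟩ := hbig
  obtain ⟨θ₁, hθ₁0, hθ₁₂, hθ₁dom, hθ₁small⟩ := hsmall θ₂ hθ₂0
  have hc : ContinuousOn (fun θ => f θ - (c * θ + d)) (Set.Icc θ₁ θ₂) :=
    ((hcont hθ₂dom).mono (Set.Icc_subset_Icc_left hθ₁0.le)).sub (by fun_prop)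
  have h0 : (0:ℝ) ∈ Set.Ioo (f θ₁ - (c * θ₁ + d)) (f θ₂ - (c * θ₂ + d)) :=
    ⟨by linarith, by linarith⟩
  obtain ⟨θ, hθmem, hθroot⟩ := intermediate_value_Ioo hθ₁₂.le hc h0
  have hθ0 : 0 < θ := hθ₁0.trans hθmem.1
  have hθdom : θ ∈ dom := hdom hθ₂dom hθ0.le hθmem.2.le
  have hθeq : f θ = c * θ + d := by
    have : f θ - (c * θ + d) = 0 := hθroot
    linarith
  refine ⟨θ, ⟨hθ0, hθdom, hθeq⟩, fun y hy => ?_⟩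
  rcases lt_trichotomy y θ with h | h | h
  · exact absurd h (uniq y θ hy ⟨hθ0, hθdom, hθeq⟩)
  · exact h
  · exact absurd h (uniq θ y ⟨hθ0, hθdom, hθeq⟩ hy)

/-- The shifted moment generating function `γ_Y(θ) = E[exp(θ Y)] - 1`, with values in
`(-∞, ∞]`. -/
noncomputable def shiftedMgf {Ω : Type*} [MeasurableSpace Ω] (P : Measure Ω) (Y : Ω → ℝ)
    (θ : ℝ) : EReal :=
  ((∫⁻ ω, ENNReal.ofReal (Real.exp (θ * Y ω)) ∂P : ENNReal) : EReal) - 1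

/-- **Exponent with investment vs. the Lundberg exponent (Theorem 3.1, analytic part).**
Under the net profit condition `p > λ E[Y]` and `b ≠ 0`:
(i) there is a unique `θ* ∈ (0, θ̄)` with `γ_Y(θ*) = p θ*/λ + b²/(2σ²λ)`;
(ii) there is a unique `θ_L ∈ (0, θ̄)` with `γ_Y(θ_L) = p θ_L/λ`;
(iii) `θ* > θ_L`. -/
theorem exponent_with_investment
    {Ω : Type*} [MeasurableSpace Ω] (P : Measure Ω) [IsProbabilityMeasure P]
    (Y : Ω → ℝ) (hYpos : ∀ ω, 0 < Y ω) (hYint : Integrable Y P)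
    (hEY : 0 < ∫ ω, Y ω ∂P)
    (θbar : EReal) (hθbar : 0 < θbar)
    (hfin : ∀ θ : ℝ, 0 ≤ θ → (θ : EReal) < θbar → shiftedMgf P Y θ ≠ ⊤)
    (hblow : Tendsto (fun θ : ℝ => shiftedMgf P Y θ)
      (Filter.comap Real.toEReal (𝓝[<] θbar)) (𝓝 ⊤))
    (lam p σ b : ℝ) (hlam : 0 < lam) (hp : 0 < p) (hσ : 0 < σ) (hb : b ≠ 0)
    (hnet : lam * ∫ ω, Y ω ∂P < p) :
    (∃! θs : ℝ, 0 < θs ∧ (θs : EReal) < θbar ∧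
      shiftedMgf P Y θs = ((p * θs / lam + b ^ 2 / (2 * σ ^ 2 * lam) : ℝ) : EReal)) ∧
    (∃! θl : ℝ, 0 < θl ∧ (θl : EReal) < θbar ∧
      shiftedMgf P Y θl = ((p * θl / lam : ℝ) : EReal)) ∧
    (∀ θs θl : ℝ,
      (0 < θs ∧ (θs : EReal) < θbar ∧
        shiftedMgf P Y θs = ((p * θs / lam + b ^ 2 / (2 * σ ^ 2 * lam) : ℝ) : EReal)) →
      (0 < θl ∧ (θl : EReal) < θbar ∧
        shiftedMgf P Y θl = ((p * θl / lam : ℝ) : EReal)) →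
      θl < θs) := by
  classical
  set dom : Set ℝ := {θ : ℝ | 0 ≤ θ ∧ (θ : EReal) < θbar} with hdomdef
  have hmemdom : ∀ θ : ℝ, θ ∈ dom ↔ (0 ≤ θ ∧ (θ : EReal) < θbar) := by
    intro θ; rw [hdomdef]; rfl
  have hdom_lower : ∀ ⦃x y : ℝ⦄, y ∈ dom → 0 ≤ x → x ≤ y → x ∈ dom := by
    intro x y hy hx hxy
    rw [hmemdom] at *
    exact ⟨hx, lt_of_le_of_lt (by exact_mod_cast hxy : (x : EReal) ≤ y) hy.2⟩
  -- integrability on the domain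
  have hInt : ∀ θ ∈ dom, Integrable (fun ω => Real.exp (θ * Y ω)) P := by
    intro θ hθ
    rw [hmemdom] at hθ
    have hne := hfin θ hθ.1 hθ.2
    have hL : (∫⁻ ω, ENNReal.ofReal (Real.exp (θ * Y ω)) ∂P) ≠ ⊤ := by
      intro h
      apply hne
      simp [shiftedMgf, h, ← EReal.coe_one, EReal.top_sub_coe]
    refine ⟨Real.continuous_exp.comp_aestronglyMeasurable (hYint.1.const_mul θ), ?_⟩
    rw [hasFiniteIntegral_iff_ofReal (Filter.Eventually.of_forall fun ω => (Real.exp_pos _).le)]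
    exact lt_top_iff_ne_top.2 hL
  -- representation of shiftedMgf on the domain
  have hrepr : ∀ θ ∈ dom, shiftedMgf P Y θ
      = ((∫ ω, Real.exp (θ * Y ω) ∂P - 1 : ℝ) : EReal) := by
    intro θ hθ
    have h1 : ∫⁻ ω, ENNReal.ofReal (Real.exp (θ * Y ω)) ∂P
        = ENNReal.ofReal (∫ ω, Real.exp (θ * Y ω) ∂P) :=
      (ofReal_integral_eq_lintegral_ofReal (hInt θ hθ)
        (Filter.Eventually.of_forall fun ω => (Real.exp_pos _).le)).symm
    have hnn : 0 ≤ ∫ ω, Real.exp (θ * Y ω) ∂P := integral_nonneg fun ω => (Real.exp_pos _).le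
    rw [shiftedMgf, h1, EReal.coe_ennreal_ofReal, max_eq_left hnn, ← EReal.coe_one,
      ← EReal.coe_sub]
  -- a positive point of the domain
  obtain ⟨u, hu0, hudom⟩ : ∃ u : ℝ, 0 < u ∧ u ∈ dom := by
    obtain ⟨cE, hcE0, hcEbar⟩ := exists_between hθbar
    have hcEtop : cE ≠ ⊤ := (lt_of_lt_of_le hcEbar le_top).ne
    have hcEbot : cE ≠ ⊥ := by rintro rfl; simp at hcE0
    have hcoe : (cE.toReal : EReal) = cE := EReal.coe_toReal hcEtop hcEbot
    have h0 : 0 < cE.toReal := by rw [← hcoe] at hcE0; exact_mod_cast hcE0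
    exact ⟨cE.toReal, h0, (hmemdom _).2 ⟨h0.le, by rw [hcoe]; exact hcEbar⟩⟩
  -- continuity
  have hcont : ∀ ⦃y⦄, y ∈ dom →
      ContinuousOn (fun θ => ∫ ω, Real.exp (θ * Y ω) ∂P - 1) (Set.Icc 0 y) := by
    intro y hy
    have hGc : ContinuousOn (fun θ => ∫ ω, Real.exp (θ * Y ω) ∂P) (Set.Icc 0 y) := by
      intro θ₀ hθ₀
      apply continuousWithinAt_of_dominated (bound := fun ω => Real.exp (y * Y ω))
      · exact Filter.Eventually.of_forall fun θ =>
          Real.continuous_exp.comp_aestronglyMeasurable (hYint.1.const_mul θ)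
      · refine Filter.eventually_of_mem self_mem_nhdsWithin fun θ hθ => ?_
        refine Filter.Eventually.of_forall fun ω => ?_
        rw [Real.norm_eq_abs, Real.abs_exp]
        exact Real.exp_le_exp.2 (mul_le_mul_of_nonneg_right hθ.2 (hYpos ω).le)
      · exact hInt y hy
      · exact Filter.Eventually.of_forall fun ω =>
          (Real.continuous_exp.comp (continuous_id.mul continuous_const)).continuousWithinAt
    exact hGc.sub continuousOn_const
  -- strict chord inequality
  have hchord : ∀ ⦃y t : ℝ⦄, y ∈ dom → 0 < y → 0 < t → t < 1 →
      (∫ ω, Real.exp (t * y * Y ω) ∂P) - 1 < t * ((∫ ω, Real.exp (y * Y ω) ∂P) - 1) := by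
    intro y t hy hypos ht ht1
    set a := 1 - t with ha
    have hapos : 0 < a := by simp [ha]; linarith
    have hty : t * y ∈ dom := hdom_lower hy (by positivity) (by nlinarith)
    set g : Ω → ℝ := fun ω => a + t * Real.exp (y * Y ω) - Real.exp (t * y * Y ω) with hg
    have hgpos : ∀ ω, 0 < g ω := by
      intro ω
      have huv : (0:ℝ) ≠ y * Y ω := (mul_pos hypos (hYpos ω)).ne
      have := exp_strict_ineq' huv hapos ht (by ring)
      simp only [mul_zero, zero_add, Real.exp_zero, mul_one] at this
      simp only [hg, mul_assoc]
      linarith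
    have hgint : Integrable g P :=
      ((integrable_const a).add ((hInt y hy).const_mul t)).sub (hInt _ hty)
    have hgpos' : 0 < ∫ ω, g ω ∂P := by
      rw [integral_pos_iff_support_of_nonneg_ae
        (Filter.Eventually.of_forall fun ω => (hgpos ω).le) hgint]
      have : Function.support g = Set.univ := Set.eq_univ_of_forall fun ω => (hgpos ω).ne'
      rw [this]
      simp
    have hcalc : ∫ ω, g ω ∂P
        = a + t * (∫ ω, Real.exp (y * Y ω) ∂P) - ∫ ω, Real.exp (t * y * Y ω) ∂P := by
      have hi1 : Integrable (fun ω => a + t * Real.exp (y * Y ω)) P :=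
        (integrable_const a).add ((hInt y hy).const_mul t)
      have hi2 : Integrable (fun ω => t * Real.exp (y * Y ω)) P := (hInt y hy).const_mul t
      simp only [hg]
      rw [integral_sub hi1 (hInt _ hty), integral_add (integrable_const a) hi2, integral_const,
        MeasureTheory.integral_const_mul]
      simp
    rw [hcalc] at hgpos'
    simp only [ha] at hgpos' ⊢
    linarith
  -- slope at zero
  have hslope : Tendsto (fun θ : ℝ => ((∫ ω, Real.exp (θ * Y ω) ∂P) - 1) / θ) (𝓝[>] (0:ℝ))
      (𝓝 (∫ ω, Y ω ∂P)) := by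
    set θ₀ := u / 2 with hθ₀def
    have hθ₀pos : 0 < θ₀ := by positivity
    have hθ₀u : θ₀ < u := by simp [hθ₀def]; linarith
    set B : Ω → ℝ := fun ω => Y ω * Real.exp (θ₀ * Y ω) with hB
    have hBint : Integrable B P := by
      apply Integrable.mono' ((hInt u hudom).const_mul (1/θ₀))
      · exact hYint.1.mul (Real.continuous_exp.comp_aestronglyMeasurable (hYint.1.const_mul θ₀))
      · refine Filter.Eventually.of_forall fun ω => ?_
        have hx : 0 < θ₀ * Y ω := mul_pos hθ₀pos (hYpos ω)
        have h1 : θ₀ * Y ω ≤ Real.exp (θ₀ * Y ω) := by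
          nlinarith [Real.add_one_le_exp (θ₀ * Y ω)]
        have he : Real.exp (u * Y ω) = Real.exp (θ₀ * Y ω) * Real.exp (θ₀ * Y ω) := by
          rw [← Real.exp_add]; congr 1; simp [hθ₀def]; ring
        rw [Real.norm_eq_abs, abs_of_nonneg (mul_nonneg (hYpos ω).le (Real.exp_pos _).le)]
        calc B ω = (1/θ₀) * ((θ₀ * Y ω) * Real.exp (θ₀ * Y ω)) := by
              simp only [hB]; field_simp
          _ ≤ (1/θ₀) * (Real.exp (θ₀ * Y ω) * Real.exp (θ₀ * Y ω)) := by
              apply mul_le_mul_of_nonneg_left _ (by positivity)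
              exact mul_le_mul_of_nonneg_right h1 (Real.exp_pos _).le
          _ = 1/θ₀ * Real.exp (u * Y ω) := by rw [he]
    have hIoo : Set.Ioo (0:ℝ) θ₀ ∈ 𝓝[>] (0:ℝ) := Ioo_mem_nhdsGT_of_mem ⟨le_refl 0, hθ₀pos⟩
    have key : Tendsto (fun θ : ℝ => ∫ ω, (Real.exp (θ * Y ω) - 1) / θ ∂P) (𝓝[>] (0:ℝ))
        (𝓝 (∫ ω, Y ω ∂P)) := by
      apply tendsto_integral_filter_of_dominated_convergence B
      · refine Filter.Eventually.of_forall fun θ => ?_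
        have := ((Real.continuous_exp.comp_aestronglyMeasurable (hYint.1.const_mul θ)).sub
            (aestronglyMeasurable_const (b := (1:ℝ)))).const_mul θ⁻¹
        simpa [div_eq_inv_mul] using this
      · filter_upwards [hIoo] with θ hθ
        refine Filter.Eventually.of_forall fun ω => ?_
        have hθpos := hθ.1
        have hnn : (0:ℝ) ≤ (Real.exp (θ * Y ω) - 1) / θ := by
          apply div_nonneg _ hθpos.le
          have : (0:ℝ) ≤ θ * Y ω := mul_nonneg hθpos.le (hYpos ω).le
          nlinarith [Real.exp_le_exp.2 this, Real.exp_zero]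
        rw [Real.norm_eq_abs, abs_of_nonneg hnn]
        rw [div_le_iff₀ hθpos]
        have h2 := exp_sub_one_le_mul' (θ * Y ω)
        have h3 : Real.exp (θ * Y ω) ≤ Real.exp (θ₀ * Y ω) :=
          Real.exp_le_exp.2 (mul_le_mul_of_nonneg_right hθ.2.le (hYpos ω).le)
        have h4 : θ * Y ω * Real.exp (θ * Y ω) ≤ θ * (Y ω * Real.exp (θ₀ * Y ω)) := by
          have := mul_le_mul_of_nonneg_left h3 (mul_nonneg hθpos.le (hYpos ω).le)
          nlinarith
        simp only [hB]
        linarith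
      · exact hBint
      · refine Filter.Eventually.of_forall fun ω => ?_
        have hd : HasDerivAt (fun θ : ℝ => Real.exp (θ * Y ω)) (Y ω) 0 := by
          simpa using (hasDerivAt_mul_const (Y ω) (x := (0:ℝ))).exp
        have hslope0 := hasDerivAt_iff_tendsto_slope.1 hd
        have hmono : 𝓝[>] (0:ℝ) ≤ 𝓝[≠] (0:ℝ) :=
          nhdsWithin_mono 0 fun θ hθ => ne_of_gt hθ
        refine Tendsto.congr' ?_ (hslope0.mono_left hmono)
        filter_upwards [self_mem_nhdsWithin] with θ hθ
        simp [slope_def_field, Real.exp_zero]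
    refine key.congr' ?_
    filter_upwards [hIoo] with θ hθ
    have hθdom : θ ∈ dom := hdom_lower hudom hθ.1.le (by linarith [hθ.2])
    rw [integral_div, integral_sub (hInt θ hθdom) (integrable_const 1), integral_const]
    simp
  -- the small-θ point
  have hcpos : 0 < p / lam := div_pos hp hlam
  have hEc : (∫ ω, Y ω ∂P) < p / lam := by
    rw [lt_div_iff₀ hlam, mul_comm]; exact hnet
  have hsmall : ∀ e, 0 < e → ∃ θ, 0 < θ ∧ θ < e ∧ θ ∈ dom ∧
      (∫ ω, Real.exp (θ * Y ω) ∂P) - 1 < p / lam * θ := by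
    intro e he
    have h1 := hslope.eventually_lt_const hEc
    have h2 : Set.Ioo (0:ℝ) (min e u) ∈ 𝓝[>] (0:ℝ) :=
      Ioo_mem_nhdsGT_of_mem ⟨le_refl 0, lt_min he hu0⟩
    obtain ⟨θ, hθa, hθb⟩ := (h1.and (Filter.eventually_of_mem h2 fun x hx => hx)).exists
    have hθ0 : 0 < θ := hθb.1
    have hθdom : θ ∈ dom := hdom_lower hudom hθ0.le (le_of_lt (lt_of_lt_of_le hθb.2 (min_le_right _ _)))
    refine ⟨θ, hθ0, lt_of_lt_of_le hθb.2 (min_le_left _ _), hθdom, ?_⟩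
    have := (div_lt_iff₀ hθ0).1 hθa
    linarith
  -- the large-θ point
  have hbig : ∀ D : ℝ, 0 ≤ D → ∃ θ, 0 < θ ∧ θ ∈ dom ∧
      p / lam * θ + D < (∫ ω, Real.exp (θ * Y ω) ∂P) - 1 := by
    intro D hD
    rcases eq_or_ne θbar ⊤ with htop | htop
    · -- θbar = ⊤
      have hdomall : ∀ θ : ℝ, 0 ≤ θ → θ ∈ dom := fun θ hθ =>
        (hmemdom θ).2 ⟨hθ, htop ▸ EReal.coe_lt_top θ⟩
      have hY2 : Integrable (fun ω => Y ω ^ 2) P := by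
        apply Integrable.mono' ((hInt u hudom).const_mul (4 / u ^ 2))
        · simp only [sq]; exact hYint.1.mul hYint.1
        · refine Filter.Eventually.of_forall fun ω => ?_
          rw [Real.norm_eq_abs, abs_of_nonneg (sq_nonneg _)]
          have h1 : u * Y ω / 2 ≤ Real.exp (u * Y ω / 2) := by
            nlinarith [Real.add_one_le_exp (u * Y ω / 2)]
          have h2 : Real.exp (u * Y ω) = Real.exp (u * Y ω / 2) * Real.exp (u * Y ω / 2) := by
            rw [← Real.exp_add]; congr 1; ring
          have hx : 0 < u * Y ω := mul_pos hu0 (hYpos ω)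
          have h3 : (u * Y ω / 2) * (u * Y ω / 2) ≤ Real.exp (u * Y ω) := by
            rw [h2]; exact mul_le_mul h1 h1 (by linarith) (Real.exp_pos _).le
          have := mul_le_mul_of_nonneg_left h3 (le_of_lt (by positivity : (0:ℝ) < 4 / u ^ 2))
          calc Y ω ^ 2 = 4 / u ^ 2 * ((u * Y ω / 2) * (u * Y ω / 2)) := by field_simp; ring
            _ ≤ 4 / u ^ 2 * Real.exp (u * Y ω) := this
      set M := ∫ ω, Y ω ^ 2 ∂P with hM
      have hMpos : 0 < M := by
        rw [hM, integral_pos_iff_support_of_nonneg_ae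
          (Filter.Eventually.of_forall fun ω => sq_nonneg _) hY2]
        have : Function.support (fun ω => Y ω ^ 2) = Set.univ :=
          Set.eq_univ_of_forall fun ω => (pow_pos (hYpos ω) 2).ne'
        rw [this]; simp
      clear_value M
      have hfrac : 0 < 4 * (p / lam + D + 1) / M := by
        apply div_pos _ hMpos; linarith
      set θ₂ := 4 * (p / lam + D + 1) / M + 1 with hθ₂
      clear_value θ₂
      have hθ₂pos : 0 < θ₂ := by rw [hθ₂]; linarith
      have hθ₂ge1 : 1 ≤ θ₂ := by rw [hθ₂]; linarith
      refine ⟨θ₂, hθ₂pos, hdomall θ₂ hθ₂pos.le, ?_⟩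
      have hlow : θ₂ ^ 2 / 4 * M ≤ (∫ ω, Real.exp (θ₂ * Y ω) ∂P) - 1 := by
        have hmono : ∫ ω, θ₂ ^ 2 / 4 * Y ω ^ 2 ∂P ≤ ∫ ω, (Real.exp (θ₂ * Y ω) - 1) ∂P := by
          apply integral_mono (hY2.const_mul _) ((hInt θ₂ (hdomall θ₂ hθ₂pos.le)).sub
            (integrable_const 1))
          intro ω
          have hx : 0 ≤ θ₂ * Y ω := mul_nonneg hθ₂pos.le (hYpos ω).le
          have h1 : θ₂ * Y ω / 2 + 1 ≤ Real.exp (θ₂ * Y ω / 2) := Real.add_one_le_exp _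
          have h2 : Real.exp (θ₂ * Y ω) = Real.exp (θ₂ * Y ω / 2) * Real.exp (θ₂ * Y ω / 2) := by
            rw [← Real.exp_add]; congr 1; ring
          have h4 : (θ₂ * Y ω / 2 + 1) * (θ₂ * Y ω / 2 + 1)
              ≤ Real.exp (θ₂ * Y ω / 2) * Real.exp (θ₂ * Y ω / 2) :=
            mul_le_mul h1 h1 (by linarith) (Real.exp_pos _).le
          simp only [Pi.sub_apply]
          nlinarith [h4, h2, hx]
        rw [MeasureTheory.integral_const_mul,
          integral_sub (hInt θ₂ (hdomall θ₂ hθ₂pos.le)) (integrable_const 1),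
          integral_const] at hmono
        simp only [measure_univ, probReal_univ, ENNReal.toReal_one, smul_eq_mul, one_mul] at hmono
        rw [← hM] at hmono
        linarith
      have h2' : θ₂ * M = 4 * (p / lam + D + 1) + M := by
        rw [hθ₂]; field_simp
      have h3 : θ₂ * (θ₂ * M) = θ₂ * (4 * (p / lam + D + 1) + M) := by rw [h2']
      linarith [h3, mul_nonneg hD (sub_nonneg.2 hθ₂ge1), mul_pos hθ₂pos hMpos, hθ₂ge1, hlow]
    · -- θbar finite
      have hbot : θbar ≠ ⊥ := fun h => by simp [h] at hθbar
      set T := θbar.toReal with hT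
      have hTbar : (T : EReal) = θbar := EReal.coe_toReal htop hbot
      have hT0 : 0 < T := by
        rw [← hTbar] at hθbar; exact_mod_cast hθbar
      have hcomap : Filter.comap Real.toEReal (𝓝[<] θbar) = 𝓝[<] T := by
        rw [← hTbar, nhdsWithin, nhdsWithin, Filter.comap_inf, Filter.comap_principal]
        congr 1
        · rw [EReal.nhds_coe, Filter.comap_map EReal.coe_injective]
        · congr 1
          ext x
          simp [EReal.coe_lt_coe_iff]
      have hev1 : ∀ᶠ θ : ℝ in 𝓝[<] T,
          ((p / lam * T + D : ℝ) : EReal) < shiftedMgf P Y θ := by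
        rw [← hcomap]
        exact hblow.eventually_const_lt (EReal.coe_lt_top _)
      have hev2 : ∀ᶠ θ : ℝ in 𝓝[<] T, θ < T := eventually_mem_nhdsWithin
      have hev3 : ∀ᶠ θ : ℝ in 𝓝[<] T, 0 < θ :=
        eventually_nhdsWithin_of_eventually_nhds (eventually_gt_nhds hT0)
      obtain ⟨θ₂, h1, h2, h3⟩ := (hev1.and (hev2.and hev3)).exists
      have hθdom : θ₂ ∈ dom := (hmemdom θ₂).2 ⟨h3.le, by rw [← hTbar]; exact_mod_cast h2⟩
      refine ⟨θ₂, h3, hθdom, ?_⟩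
      rw [hrepr θ₂ hθdom] at h1
      have h4 : (p / lam * T + D : ℝ) < (∫ ω, Real.exp (θ₂ * Y ω) ∂P) - 1 := by
        exact_mod_cast h1
      nlinarith [h2, h4, hcpos]
  -- apply the crossing lemma
  have hb2 : 0 < b ^ 2 := lt_of_le_of_ne (sq_nonneg b) (Ne.symm (pow_ne_zero 2 hb))
  have hdpos : 0 < b ^ 2 / (2 * σ ^ 2 * lam) := div_pos hb2 (by positivity)
  have key1 := crossing_aux' (fun θ => (∫ ω, Real.exp (θ * Y ω) ∂P) - 1) dom (p / lam)
    (b ^ 2 / (2 * σ ^ 2 * lam)) hdom_lower hchord hcont hdpos.le hsmall (hbig _ hdpos.le)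
  have key0 := crossing_aux' (fun θ => (∫ ω, Real.exp (θ * Y ω) ∂P) - 1) dom (p / lam)
    0 hdom_lower hchord hcont le_rfl hsmall (hbig 0 le_rfl)
  have e1 : ∀ θ : ℝ, (0 < θ ∧ (θ : EReal) < θbar ∧
      shiftedMgf P Y θ = ((p * θ / lam + b ^ 2 / (2 * σ ^ 2 * lam) : ℝ) : EReal))
      ↔ (0 < θ ∧ θ ∈ dom ∧
        (∫ ω, Real.exp (θ * Y ω) ∂P) - 1 = p / lam * θ + b ^ 2 / (2 * σ ^ 2 * lam)) := by
    intro θ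
    constructor
    · rintro ⟨h1, h2, h3⟩
      have hθdom : θ ∈ dom := (hmemdom θ).2 ⟨h1.le, h2⟩
      rw [hrepr θ hθdom] at h3
      have h4 := EReal.coe_eq_coe_iff.1 h3
      exact ⟨h1, hθdom, by rw [h4]; ring⟩
    · rintro ⟨h1, hθdom, h3⟩
      refine ⟨h1, ((hmemdom θ).1 hθdom).2, ?_⟩
      rw [hrepr θ hθdom, EReal.coe_eq_coe_iff, h3]
      ring
  have e2 : ∀ θ : ℝ, (0 < θ ∧ (θ : EReal) < θbar ∧
      shiftedMgf P Y θ = ((p * θ / lam : ℝ) : EReal))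
      ↔ (0 < θ ∧ θ ∈ dom ∧ (∫ ω, Real.exp (θ * Y ω) ∂P) - 1 = p / lam * θ + 0) := by
    intro θ
    constructor
    · rintro ⟨h1, h2, h3⟩
      have hθdom : θ ∈ dom := (hmemdom θ).2 ⟨h1.le, h2⟩
      rw [hrepr θ hθdom] at h3
      have h4 := EReal.coe_eq_coe_iff.1 h3
      exact ⟨h1, hθdom, by rw [h4]; ring⟩
    · rintro ⟨h1, hθdom, h3⟩
      refine ⟨h1, ((hmemdom θ).1 hθdom).2, ?_⟩
      rw [hrepr θ hθdom, EReal.coe_eq_coe_iff, h3]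
      ring
  refine ⟨(existsUnique_congr e1).2 key1, (existsUnique_congr e2).2 key0, ?_⟩
  -- comparison θ_L < θ*
  intro θs θl hs hl
  obtain ⟨hs1, hsdom, hseq⟩ := (e1 θs).1 hs
  obtain ⟨hl1, hldom, hleq⟩ := (e2 θl).1 hl
  by_contra hcon
  push_neg at hcon
  rcases eq_or_lt_of_le hcon with heq | hlt
  · rw [← heq] at hleq
    rw [hseq] at hleq
    have : b ^ 2 / (2 * σ ^ 2 * lam) = 0 := by linarith
    exact hdpos.ne' this
  · have ht0 : 0 < θs / θl := div_pos hs1 hl1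
    have ht1 : θs / θl < 1 := (div_lt_one hl1).2 hlt
    have hkey := hchord hldom hl1 ht0 ht1
    rw [div_mul_cancel₀ _ hl1.ne'] at hkey
    rw [hseq, hleq] at hkey
    have h5 : θs / θl * (p / lam * θl + 0) = p / lam * θs := by
      field_simp; ring
    rw [h5] at hkey
    linarith [hkey, hdpos]
end

section
/- (Asymptotics of the critical factor level in the proof of Theorem 5.1.) Let p(z) = Φ((ρz + Φ⁻¹(p))/√(1−ρ²)), a strictly increasing continuous bijection from ℝ onto (0,1), and for each n let zₙ be the unique real number with p(zₙ) = qₙ. If qₙ → 1 and ln(1 − qₙ)/ln n → −a with 0 < a ≤ 1, then zₙ → ∞ and lim_{n→∞} zₙ²/ln n = 2a(1 − ρ²)/ρ². -/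
open MeasureTheory ProbabilityTheory Filter Topology

/-- The standard normal cumulative distribution function. -/
noncomputable def stdNormalCDF (x : ℝ) : ℝ :=
  ((gaussianReal 0 1) (Set.Iic x)).toReal

namespace CriticalFactorAux

open Real

/-- The standard normal density. -/
noncomputable def phi (t : ℝ) : ℝ := (Real.sqrt (2*π))⁻¹ * Real.exp (-t^2/2)

lemma hphi : gaussianPDFReal 0 1 = phi := by
  ext t; simp [gaussianPDFReal, phi]

lemma phi_int : Integrable phi := by rw [← hphi]; exact integrable_gaussianPDFReal 0 1

lemma phi_total : ∫ t, phi t = 1 := by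
  rw [← hphi]; exact integral_gaussianPDFReal_eq_one 0 one_ne_zero

lemma phi_pos (t : ℝ) : 0 < phi t := by
  have h : (0:ℝ) < Real.sqrt (2*π) := Real.sqrt_pos.2 (by positivity)
  exact mul_pos (inv_pos.2 h) (Real.exp_pos _)

lemma cdf_eq (x : ℝ) : stdNormalCDF x = ∫ t in Set.Iic x, phi t := by
  rw [stdNormalCDF, gaussianReal_apply_eq_integral 0 one_ne_zero,
    ENNReal.toReal_ofReal (integral_nonneg (fun t => gaussianPDFReal_nonneg 0 1 t)), hphi]

lemma tail_eq (x : ℝ) : 1 - stdNormalCDF x = ∫ t in Set.Ioi x, phi t := by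
  have h : (∫ t in Set.Iic x, phi t) + ∫ t in Set.Ioi x, phi t = 1 := by
    rw [← phi_total]
    rw [← setIntegral_union (Set.Iic_disjoint_Ioi le_rfl) measurableSet_Ioi
      phi_int.integrableOn phi_int.integrableOn, Set.Iic_union_Ioi,
      setIntegral_univ]
  rw [cdf_eq]; linarith

lemma exp_deriv (t : ℝ) :
    HasDerivAt (fun t : ℝ => Real.exp (-t^2/2)) (-t * Real.exp (-t^2/2)) t := by
  have h1 : HasDerivAt (fun t : ℝ => -t^2/2) (-t) t := by
    have := ((hasDerivAt_pow 2 t).neg).div_const 2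
    refine this.congr_deriv ?_; push_cast; ring
  simpa [mul_comm] using h1.exp

lemma exp_tendsto : Tendsto (fun t : ℝ => Real.exp (-t^2/2)) atTop (𝓝 0) := by
  apply Real.tendsto_exp_atBot.comp
  have h : Tendsto (fun t : ℝ => t^2/2) atTop atTop :=
    (tendsto_pow_atTop two_ne_zero).atTop_div_const (by norm_num)
  have h2 : Tendsto (fun t : ℝ => -(t^2/2)) atTop atBot := tendsto_neg_atBot_iff.2 h
  simpa [neg_div] using h2

lemma tail_upper {x : ℝ} (hx : 0 < x) : ∫ t in Set.Ioi x, phi t ≤ phi x / x := by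
  set c := (Real.sqrt (2*π))⁻¹ with hc
  have hd : ∀ t ∈ Set.Ici x, HasDerivAt (fun t => -(x⁻¹) * (c * Real.exp (-t^2/2)))
      ((t/x) * phi t) t := by
    intro t _
    have := ((exp_deriv t).const_mul c).const_mul (-(x⁻¹))
    refine this.congr_deriv ?_
    simp only [phi, ← hc]; ring
  have hpos : ∀ t ∈ Set.Ioi x, 0 ≤ (t/x) * phi t := by
    intro t ht
    exact mul_nonneg (div_nonneg (le_of_lt (lt_trans hx ht)) hx.le) (phi_pos t).le
  have hlim : Tendsto (fun t => -(x⁻¹) * (c * Real.exp (-t^2/2))) atTop (𝓝 0) := by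
    have := (exp_tendsto.const_mul c).const_mul (-(x⁻¹))
    simpa using this
  have hint : IntegrableOn (fun t => (t/x) * phi t) (Set.Ioi x) :=
    integrableOn_Ioi_deriv_of_nonneg' hd hpos hlim
  have hval : ∫ t in Set.Ioi x, (t/x) * phi t = phi x / x := by
    rw [integral_Ioi_of_hasDerivAt_of_nonneg' hd hpos hlim]
    simp only [phi, ← hc]
    field_simp; ring
  rw [← hval]
  apply setIntegral_mono_on phi_int.integrableOn hint measurableSet_Ioi
  intro t ht
  nth_rewrite 1 [← one_mul (phi t)]
  exact mul_le_mul_of_nonneg_right ((one_le_div hx).2 (le_of_lt ht)) (phi_pos t).le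

lemma tail_lower {x : ℝ} (hx : 0 < x) :
    phi x * x / (x^2+1) ≤ ∫ t in Set.Ioi x, phi t := by
  set c := (Real.sqrt (2*π))⁻¹ with hc
  have hd : ∀ t ∈ Set.Ici x, HasDerivAt (fun t => -(c * Real.exp (-t^2/2) * t⁻¹))
      (phi t * (1 + t⁻¹^2)) t := by
    intro t ht
    have htne : t ≠ 0 := ne_of_gt (lt_of_lt_of_le hx ht)
    have h1 := ((exp_deriv t).const_mul c).mul (hasDerivAt_inv htne)
    have := h1.neg
    refine this.congr_deriv ?_
    simp only [phi, ← hc]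
    field_simp
    ring
  have hpos : ∀ t ∈ Set.Ioi x, 0 ≤ phi t * (1 + t⁻¹^2) := by
    intro t _; exact mul_nonneg (phi_pos t).le (by positivity)
  have hlim : Tendsto (fun t => -(c * Real.exp (-t^2/2) * t⁻¹)) atTop (𝓝 0) := by
    have := ((exp_tendsto.const_mul c).mul tendsto_inv_atTop_zero).neg
    simpa using this
  have hint : IntegrableOn (fun t => phi t * (1 + t⁻¹^2)) (Set.Ioi x) :=
    integrableOn_Ioi_deriv_of_nonneg' hd hpos hlim
  have hval : ∫ t in Set.Ioi x, phi t * (1 + t⁻¹^2) = phi x / x := by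
    rw [integral_Ioi_of_hasDerivAt_of_nonneg' hd hpos hlim]
    simp only [phi, ← hc]
    field_simp; ring
  have hcomp : ∫ t in Set.Ioi x, phi t * (1 + t⁻¹^2)
      ≤ (1 + x⁻¹^2) * ∫ t in Set.Ioi x, phi t := by
    rw [← integral_const_mul]
    apply setIntegral_mono_on hint (phi_int.integrableOn.const_mul _) measurableSet_Ioi
    intro t ht
    rw [mul_comm ((1:ℝ) + x⁻¹^2)]
    apply mul_le_mul_of_nonneg_left _ (phi_pos t).le
    have h2 : t⁻¹ ≤ x⁻¹ := inv_anti₀ hx (le_of_lt ht)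
    have ht0 : (0:ℝ) ≤ t⁻¹ := inv_nonneg.2 (le_of_lt (lt_trans hx ht))
    nlinarith
  set T := ∫ t in Set.Ioi x, phi t with hT
  have h1 : phi x / x ≤ (1 + x⁻¹^2) * T := hval ▸ hcomp
  have e : (1:ℝ) + x⁻¹^2 = (x^2+1)/x^2 := by field_simp
  rw [e] at h1
  rw [div_le_iff₀ (show (0:ℝ) < x^2+1 by positivity)]
  have h2 := mul_le_mul_of_nonneg_right h1 (sq_nonneg x)
  have l1 : phi x / x * x^2 = phi x * x := by field_simp
  have l2 : (x^2+1)/x^2 * T * x^2 = T * (x^2 + 1) := by field_simp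
  rw [l1, l2] at h2
  exact h2

lemma tail_anti {a b : ℝ} (hab : a ≤ b) :
    ∫ t in Set.Ioi b, phi t ≤ ∫ t in Set.Ioi a, phi t := by
  apply setIntegral_mono_set phi_int.integrableOn
    (Filter.Eventually.of_forall (fun t => (phi_pos t).le))
    (HasSubset.Subset.eventuallyLE (Set.Ioi_subset_Ioi hab))

lemma tail_pos (M : ℝ) : 0 < ∫ t in Set.Ioi M, phi t := by
  set y : ℝ := max M 0 + 1 with hy
  have hy0 : 0 < y := by positivity
  have hMy : M ≤ y := le_trans (le_max_left M 0) (by linarith [le_refl (max M 0)])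
  calc (0:ℝ) < phi y * y / (y^2+1) := by
        have := phi_pos y; positivity
    _ ≤ ∫ t in Set.Ioi y, phi t := tail_lower hy0
    _ ≤ ∫ t in Set.Ioi M, phi t := tail_anti hMy

noncomputable def K : ℝ := Real.log (Real.sqrt (2*π))

lemma log_phi (y : ℝ) : Real.log (phi y) = -K - y^2/2 := by
  have h : (0:ℝ) < Real.sqrt (2*π) := Real.sqrt_pos.2 (by positivity)
  rw [phi, Real.log_mul (inv_ne_zero h.ne') (Real.exp_ne_zero _), Real.log_inv,
    Real.log_exp, K]
  ring

lemma logT_upper {y : ℝ} (hy : 1 ≤ y) :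
    Real.log (∫ t in Set.Ioi y, phi t) ≤ -y^2/2 - K := by
  have hy0 : (0:ℝ) < y := lt_of_lt_of_le one_pos hy
  have h1 : ∫ t in Set.Ioi y, phi t ≤ phi y := by
    calc ∫ t in Set.Ioi y, phi t ≤ phi y / y := tail_upper hy0
      _ ≤ phi y := div_le_self (phi_pos y).le hy
  calc Real.log (∫ t in Set.Ioi y, phi t) ≤ Real.log (phi y) :=
        Real.log_le_log (tail_pos y) h1
    _ = -y^2/2 - K := by rw [log_phi]; ring

lemma logT_lower {y : ℝ} (hy : 1 ≤ y) :
    -y^2/2 - K - Real.log (2*y) ≤ Real.log (∫ t in Set.Ioi y, phi t) := by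
  have hy0 : (0:ℝ) < y := lt_of_lt_of_le one_pos hy
  have h1 : phi y / (2*y) ≤ ∫ t in Set.Ioi y, phi t := by
    calc phi y / (2*y) ≤ phi y * y / (y^2+1) := by
          rw [div_le_div_iff₀ (by positivity) (by positivity)]
          have h0 := (phi_pos y).le
          nlinarith [mul_nonneg h0 (show (0:ℝ) ≤ y^2 - 1 by nlinarith)]
      _ ≤ ∫ t in Set.Ioi y, phi t := tail_lower hy0
  calc -y^2/2 - K - Real.log (2*y) = Real.log (phi y / (2*y)) := by
        rw [Real.log_div (phi_pos y).ne' (by positivity), log_phi]; ring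
    _ ≤ Real.log (∫ t in Set.Ioi y, phi t) :=
        Real.log_le_log (div_pos (phi_pos y) (by positivity)) h1

lemma aux_div (L b c : ℝ) (hL : L ≠ 0) : (L/b)/(L/c) = c/b := by
  rcases eq_or_ne b 0 with rfl|hb
  · simp
  rcases eq_or_ne c 0 with rfl|hc
  · simp
  field_simp

lemma log2y_div_sq : Tendsto (fun y : ℝ => Real.log (2*y) / y^2) atTop (𝓝 0) := by
  have h1 : Tendsto (fun y : ℝ => Real.log 2 * (y^2)⁻¹ + (Real.log y / y) * (1/y))
      atTop (𝓝 0) := by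
    have ha : Tendsto (fun y : ℝ => (y^2)⁻¹) atTop (𝓝 0) :=
      tendsto_inv_atTop_zero.comp (tendsto_pow_atTop two_ne_zero)
    have hb : Tendsto (fun y : ℝ => Real.log y / y) atTop (𝓝 0) := by
      simpa using Real.isLittleO_log_id_atTop.tendsto_div_nhds_zero
    have hc : Tendsto (fun y : ℝ => 1/y) atTop (𝓝 0) := by
      simpa [one_div] using tendsto_inv_atTop_zero
    have := (ha.const_mul (Real.log 2)).add (hb.mul hc)
    simpa using this
  apply h1.congr'
  filter_upwards [eventually_gt_atTop (0:ℝ)] with y hy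
  rw [Real.log_mul two_ne_zero hy.ne']
  field_simp

lemma Kdiv_sq : Tendsto (fun y : ℝ => K / y^2) atTop (𝓝 0) := by
  have h : Tendsto (fun y : ℝ => (y^2)⁻¹) atTop (𝓝 0) :=
    tendsto_inv_atTop_zero.comp (tendsto_pow_atTop two_ne_zero)
  simpa [div_eq_mul_inv] using h.const_mul K

lemma Flo_tendsto :
    Tendsto (fun y : ℝ => -(1/2 : ℝ) - K / y^2 - Real.log (2*y) / y^2)
      atTop (𝓝 (-(1/2))) := by
  have h := ((tendsto_const_nhds :
    Tendsto (fun _ : ℝ => -(1/2:ℝ)) atTop (𝓝 (-(1/2)))).sub Kdiv_sq).sub log2y_div_sq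
  simpa using h

lemma Fhi_tendsto :
    Tendsto (fun y : ℝ => -(1/2 : ℝ) - K / y^2) atTop (𝓝 (-(1/2))) := by
  simpa using ((tendsto_const_nhds :
    Tendsto (fun _ : ℝ => -(1/2:ℝ)) atTop (𝓝 (-(1/2)))).sub Kdiv_sq)

set_option maxHeartbeats 1000000 in
theorem main_aux
    (ρ p : ℝ) (hρ : ρ ∈ Set.Ioo (0 : ℝ) 1) (hp : p ∈ Set.Ioo (0 : ℝ) 1)
    (c : ℝ) (hc : stdNormalCDF c = p)
    (q : ℕ → ℝ) (hq : ∀ n, q n ∈ Set.Ioo (0 : ℝ) 1)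
    (z : ℕ → ℝ)
    (hz : ∀ n, stdNormalCDF ((ρ * z n + c) / Real.sqrt (1 - ρ ^ 2)) = q n)
    (hq1 : Tendsto q atTop (𝓝 1))
    (a : ℝ) (ha : 0 < a) (ha1 : a ≤ 1)
    (hrate : Tendsto (fun n : ℕ => Real.log (1 - q n) / Real.log n) atTop (𝓝 (-a))) :
    Tendsto z atTop atTop ∧
    Tendsto (fun n : ℕ => (z n) ^ 2 / Real.log n) atTop
      (𝓝 (2 * a * (1 - ρ ^ 2) / ρ ^ 2)) := by
  obtain ⟨hρ0, hρ1⟩ := hρ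
  set s : ℝ := Real.sqrt (1 - ρ^2) with hs
  have hs2 : s^2 = 1 - ρ^2 := Real.sq_sqrt (by nlinarith)
  have hspos : 0 < s := Real.sqrt_pos.2 (by nlinarith)
  set x : ℕ → ℝ := fun n => (ρ * z n + c) / s with hxdef
  -- tail values
  have hT : ∀ n, ∫ t in Set.Ioi (x n), phi t = 1 - q n := by
    intro n
    rw [← tail_eq, hz n]
  -- x tends to infinity
  have hxtop : Tendsto x atTop atTop := by
    rw [tendsto_atTop]
    intro M
    have hTM : 0 < ∫ t in Set.Ioi M, phi t := tail_pos M
    have hev : ∀ᶠ n in atTop, 1 - q n < ∫ t in Set.Ioi M, phi t := by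
      have h0 : Tendsto (fun n => 1 - q n) atTop (𝓝 0) := by
        simpa using ((tendsto_const_nhds :
          Tendsto (fun _ : ℕ => (1:ℝ)) atTop (𝓝 1)).sub hq1)
      exact h0.eventually_lt_const hTM
    filter_upwards [hev] with n hn
    by_contra hcon
    push_neg at hcon
    have mono := tail_anti hcon.le
    rw [hT n] at mono
    linarith
  -- eventually x n ≥ 1
  have hx1 : ∀ᶠ n in atTop, 1 ≤ x n := hxtop.eventually_ge_atTop 1
  -- L n is negative
  have hL0 : ∀ n, Real.log (1 - q n) < 0 := by
    intro n
    exact Real.log_neg (by linarith [(hq n).2]) (by linarith [(hq n).1])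
  -- log(1-qₙ)/xₙ² → -1/2
  have hLx : Tendsto (fun n => Real.log (1 - q n) / (x n)^2) atTop (𝓝 (-(1/2))) := by
    apply tendsto_of_tendsto_of_tendsto_of_le_of_le'
      (Flo_tendsto.comp hxtop) (Fhi_tendsto.comp hxtop)
    · filter_upwards [hx1] with n hn
      have hy0 : (0:ℝ) < x n := lt_of_lt_of_le one_pos hn
      have hlow := logT_lower hn
      rw [hT n] at hlow
      have h2 : (-(x n)^2/2 - K - Real.log (2*x n)) / (x n)^2
          ≤ Real.log (1 - q n) / (x n)^2 :=
        (div_le_div_iff_of_pos_right (by positivity)).2 hlow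
      have e : (-(x n)^2/2 - K - Real.log (2*x n)) / (x n)^2
          = -(1/2) - K/(x n)^2 - Real.log (2*(x n))/(x n)^2 := by
        field_simp
      simp only [Function.comp]
      rw [e] at h2
      exact h2
    · filter_upwards [hx1] with n hn
      have hy0 : (0:ℝ) < x n := lt_of_lt_of_le one_pos hn
      have hhi := logT_upper hn
      rw [hT n] at hhi
      have h2 : Real.log (1 - q n) / (x n)^2 ≤ (-(x n)^2/2 - K) / (x n)^2 :=
        (div_le_div_iff_of_pos_right (by positivity)).2 hhi
      have e : (-(x n)^2/2 - K) / (x n)^2 = -(1/2) - K/(x n)^2 := by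
        field_simp
      simp only [Function.comp]
      rw [e] at h2
      exact h2
  -- x²/log n → 2a
  have hx2 : Tendsto (fun n => (x n)^2 / Real.log n) atTop (𝓝 (2*a)) := by
    have key := hrate.div hLx (by norm_num : -(1/2:ℝ) ≠ 0)
    have hval : (-a)/(-(1/2)) = 2*a := by norm_num; ring
    rw [hval] at key
    have heq : ∀ n, (Real.log (1-q n)/Real.log n)/(Real.log (1-q n)/(x n)^2)
        = (x n)^2/Real.log n := fun n => aux_div _ _ _ (hL0 n).ne
    exact key.congr heq
  -- x/log n → 0
  have hxlog : Tendsto (fun n => x n / Real.log n) atTop (𝓝 0) := by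
    have h := hx2.mul (tendsto_inv_atTop_zero.comp hxtop)
    rw [mul_zero] at h
    apply h.congr'
    filter_upwards [hx1] with n hn
    have hxne : x n ≠ 0 := (lt_of_lt_of_le one_pos hn).ne'
    rcases eq_or_ne (Real.log n) 0 with hLn|hLn
    · simp [hLn]
    · show (x n)^2 / Real.log n * ((x n)⁻¹) = x n / Real.log n
      field_simp
  have hinvlog : Tendsto (fun n : ℕ => 1 / Real.log n) atTop (𝓝 0) := by
    simpa [one_div, Function.comp_def] using tendsto_inv_atTop_zero.comp
      (Real.tendsto_log_atTop.comp tendsto_natCast_atTop_atTop)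
  -- z in terms of x
  have hzeq : ∀ n, z n = (s * x n - c)/ρ := by
    intro n
    simp only [hxdef]
    field_simp; ring
  constructor
  · apply Tendsto.congr (fun n => (hzeq n).symm)
    have h1 : Tendsto (fun n => s * x n) atTop atTop := hxtop.const_mul_atTop hspos
    have h2 : Tendsto (fun n => s * x n - c) atTop atTop := by
      simpa [sub_eq_add_neg] using tendsto_atTop_add_const_right atTop (-c) h1
    exact h2.atTop_div_const hρ0
  · have final : Tendsto (fun n => (s^2 * ((x n)^2/Real.log n) - 2*s*c*(x n/Real.log n)
        + c^2 * (1/Real.log n))/ρ^2) atTop (𝓝 ((s^2*(2*a) - 2*s*c*0 + c^2*0)/ρ^2)) :=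
      (((hx2.const_mul (s^2)).sub (hxlog.const_mul (2*s*c))).add
        (hinvlog.const_mul (c^2))).div_const _
    have hval : (s^2*(2*a) - 2*s*c*0 + c^2*0)/ρ^2 = 2*a*(1-ρ^2)/ρ^2 := by
      rw [hs2]; ring
    rw [hval] at final
    apply final.congr
    intro n
    rcases eq_or_ne (Real.log n) 0 with hLn|hLn
    · simp [hLn]
    · rw [hzeq n]
      field_simp
      ring

end CriticalFactorAux

open CriticalFactorAux

/-- **Asymptotics of the critical factor level (proof of Theorem 5.1).** With
`p(z) = Φ((ρ z + Φ⁻¹(p))/√(1-ρ²))` and `zₙ` the solution of `p(zₙ) = qₙ`, if `qₙ → 1` and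
`ln(1-qₙ)/ln n → -a` with `0 < a ≤ 1`, then `zₙ → ∞` and `zₙ²/ln n → 2a(1-ρ²)/ρ²`. -/
theorem critical_factor_level_asymptotics
    (ρ p : ℝ) (hρ : ρ ∈ Set.Ioo (0 : ℝ) 1) (hp : p ∈ Set.Ioo (0 : ℝ) 1)
    (c : ℝ) (hc : stdNormalCDF c = p)
    (q : ℕ → ℝ) (hq : ∀ n, q n ∈ Set.Ioo (0 : ℝ) 1)
    (z : ℕ → ℝ)
    (hz : ∀ n, stdNormalCDF ((ρ * z n + c) / Real.sqrt (1 - ρ ^ 2)) = q n)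
    (hq1 : Tendsto q atTop (𝓝 1))
    (a : ℝ) (ha : 0 < a) (ha1 : a ≤ 1)
    (hrate : Tendsto (fun n : ℕ => Real.log (1 - q n) / Real.log n) atTop (𝓝 (-a))) :
    Tendsto z atTop atTop ∧
    Tendsto (fun n : ℕ => (z n) ^ 2 / Real.log n) atTop
      (𝓝 (2 * a * (1 - ρ ^ 2) / ρ ^ 2)) := by
  exact main_aux ρ p hρ hp c hc q hq z hz hq1 a ha ha1 hrate
end

section
/- (Gaussian bound for concave exponents, the change-of-measure step in the proof of Theorem 5.1.) Let Z be a standard normal random variable, F : ℝ → ℝ a concave differentiable function, and μ ∈ ℝ such that F'(μ) = μ. Then E[exp(F(Z))] ≤ exp(F(μ) − μ²/2). -/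
open MeasureTheory ProbabilityTheory Filter Topology

lemma concave_tangent_le {F : ℝ → ℝ} (hconc : ConcaveOn ℝ Set.univ F)
    (hdiff : Differentiable ℝ F) (μ z : ℝ) :
    F z ≤ F μ + deriv F μ * (z - μ) := by
  have hc : ConvexOn ℝ Set.univ (-F) := hconc.neg
  have hd : deriv (-F) μ = -deriv F μ := deriv.neg
  rcases lt_trichotomy z μ with h | h | h
  · have h1 := hc.slope_le_deriv (Set.mem_univ z) (Set.mem_univ μ) h ((hdiff μ).neg)
    rw [hd, slope_def_field] at h1
    simp only [Pi.neg_apply] at h1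
    have hz : 0 < μ - z := by linarith
    rw [div_le_iff₀ hz] at h1
    nlinarith
  · simp [h]
  · have h1 := hc.deriv_le_slope (Set.mem_univ μ) (Set.mem_univ z) h ((hdiff μ).neg)
    rw [hd, slope_def_field] at h1
    simp only [Pi.neg_apply] at h1
    have hz : 0 < z - μ := by linarith
    rw [le_div_iff₀ hz] at h1
    nlinarith

lemma lintegral_exp_tilt_gaussian (μ : ℝ) :
    ∫⁻ x, ENNReal.ofReal (Real.exp (μ * x - μ ^ 2 / 2)) ∂(gaussianReal 0 1) = 1 := by
  rw [gaussianReal_of_var_ne_zero 0 one_ne_zero,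
    lintegral_withDensity_eq_lintegral_mul _ (measurable_gaussianPDF 0 1)
      (show Measurable fun x : ℝ => ENNReal.ofReal (Real.exp (μ * x - μ ^ 2 / 2)) by fun_prop)]
  have heq : ∀ x : ℝ, (gaussianPDF 0 1 * fun x => ENNReal.ofReal (Real.exp (μ * x - μ ^ 2 / 2))) x
      = ENNReal.ofReal (gaussianPDFReal μ 1 x) := by
    intro x
    simp only [Pi.mul_apply, gaussianPDF, ← ENNReal.ofReal_mul (gaussianPDFReal_nonneg 0 1 x)]
    congr 1
    simp only [gaussianPDFReal]
    push_cast
    rw [mul_assoc]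
    congr 1
    rw [← Real.exp_add, Real.exp_eq_exp]
    ring
  simp_rw [heq]
  exact lintegral_gaussianPDFReal_eq_one μ one_ne_zero

/-- **Gaussian bound for concave exponents (change-of-measure step in Theorem 5.1).** If `Z` is
standard normal, `F : ℝ → ℝ` is concave and differentiable, and `μ` satisfies `F'(μ) = μ`, then
`E[exp(F(Z))] ≤ exp(F(μ) - μ²/2)`. -/
theorem gaussian_concave_exponent_bound
    {Ω : Type*} [MeasurableSpace Ω] (P : Measure Ω) [IsProbabilityMeasure P]
    (Z : Ω → ℝ) (hZ : Measure.map Z P = gaussianReal 0 1)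
    (F : ℝ → ℝ) (hconc : ConcaveOn ℝ Set.univ F) (hdiff : Differentiable ℝ F)
    (μ : ℝ) (hμ : deriv F μ = μ) :
    ∫⁻ ω, ENNReal.ofReal (Real.exp (F (Z ω))) ∂P
      ≤ ENNReal.ofReal (Real.exp (F μ - μ ^ 2 / 2)) := by
  have hZm : AEMeasurable Z P := by
    by_contra h
    rw [Measure.map_of_not_aemeasurable h] at hZ
    have := congrArg (fun m : Measure ℝ => m Set.univ) hZ
    simp at this
  have htilt_meas : Measurable fun x : ℝ => ENNReal.ofReal (Real.exp (μ * x - μ ^ 2 / 2)) :=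
    (measurable_id.const_mul μ |>.sub measurable_const).exp.ennreal_ofReal
  calc ∫⁻ ω, ENNReal.ofReal (Real.exp (F (Z ω))) ∂P
      ≤ ∫⁻ ω, ENNReal.ofReal (Real.exp (F μ - μ ^ 2 / 2))
          * ENNReal.ofReal (Real.exp (μ * Z ω - μ ^ 2 / 2)) ∂P := by
        refine lintegral_mono fun ω => ?_
        rw [← ENNReal.ofReal_mul (Real.exp_nonneg _), ← Real.exp_add]
        refine ENNReal.ofReal_le_ofReal (Real.exp_le_exp.mpr ?_)
        have := concave_tangent_le hconc hdiff μ (Z ω)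
        rw [hμ] at this
        nlinarith [this]
    _ = ENNReal.ofReal (Real.exp (F μ - μ ^ 2 / 2))
          * ∫⁻ ω, ENNReal.ofReal (Real.exp (μ * Z ω - μ ^ 2 / 2)) ∂P :=
        lintegral_const_mul' _ _ ENNReal.ofReal_ne_top
    _ = ENNReal.ofReal (Real.exp (F μ - μ ^ 2 / 2))
          * ∫⁻ x, ENNReal.ofReal (Real.exp (μ * x - μ ^ 2 / 2)) ∂(gaussianReal 0 1) := by
        rw [← hZ, lintegral_map' htilt_meas.aemeasurable hZm]
    _ = ENNReal.ofReal (Real.exp (F μ - μ ^ 2 / 2)) := by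
        rw [lintegral_exp_tilt_gaussian μ, mul_one]
end

section
/- (Explicit Fenchel–Legendre transform in the Black–Scholes example.) Let x̄ > 0. For every x ∈ ℝ, sup_{θ ∈ [0,1)} [ θx − (θ/(1−θ)) x̄ ] = (√x − √x̄)² if x ≥ x̄, and = 0 if x < x̄; moreover, when x > x̄ the supremum is attained at the unique point θ(x) = 1 − √(x̄/x) ∈ (0,1). -/
open Real

lemma sup_eq_of_max' {ι : Type*} [Nonempty ι] (f : ι → ℝ) (M : ℝ) (i : ι)
    (hub : ∀ j, f j ≤ M) (hi : f i = M) : (⨆ j, f j) = M :=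
  le_antisymm (ciSup_le hub) (hi ▸ le_ciSup ⟨M, by rintro _ ⟨j, rfl⟩; exact hub j⟩ i)

/-- **Explicit Fenchel–Legendre transform in the Black–Scholes example.** For `x̄ > 0`,
`sup_{θ ∈ [0,1)} [θ x - (θ/(1-θ)) x̄]` equals `(√x - √x̄)²` if `x ≥ x̄` and `0` if `x < x̄`;
moreover for `x > x̄` the supremum is attained at the unique point
`θ(x) = 1 - √(x̄/x) ∈ (0,1)`. -/
theorem black_scholes_fenchel_legendre (xbar : ℝ) (hxbar : 0 < xbar) (x : ℝ) :
    (xbar ≤ x →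
      (⨆ θ : Set.Ico (0 : ℝ) 1, ((θ : ℝ) * x - (θ : ℝ) / (1 - (θ : ℝ)) * xbar))
        = (Real.sqrt x - Real.sqrt xbar) ^ 2) ∧
    (x < xbar →
      (⨆ θ : Set.Ico (0 : ℝ) 1, ((θ : ℝ) * x - (θ : ℝ) / (1 - (θ : ℝ)) * xbar)) = 0) ∧
    (xbar < x →
      (1 - Real.sqrt (xbar / x) ∈ Set.Ioo (0 : ℝ) 1 ∧
       (1 - Real.sqrt (xbar / x)) * x
          - (1 - Real.sqrt (xbar / x)) / (1 - (1 - Real.sqrt (xbar / x))) * xbar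
          = (⨆ θ : Set.Ico (0 : ℝ) 1, ((θ : ℝ) * x - (θ : ℝ) / (1 - (θ : ℝ)) * xbar)) ∧
       ∀ θ ∈ Set.Ico (0 : ℝ) 1,
         θ * x - θ / (1 - θ) * xbar
            = (⨆ θ' : Set.Ico (0 : ℝ) 1, ((θ' : ℝ) * x - (θ' : ℝ) / (1 - (θ' : ℝ)) * xbar)) →
         θ = 1 - Real.sqrt (xbar / x))) := by
  have hne : Nonempty (Set.Ico (0:ℝ) 1) := ⟨⟨0, by norm_num⟩⟩
  have hb0 : 0 < Real.sqrt xbar := Real.sqrt_pos.mpr hxbar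
  have hb2 : Real.sqrt xbar ^ 2 = xbar := Real.sq_sqrt hxbar.le
  set b := Real.sqrt xbar with hb
  -- upper bound for x ≥ xbar
  have hub : ∀ (hx : xbar ≤ x) (θ : Set.Ico (0:ℝ) 1),
      (θ : ℝ) * x - (θ : ℝ) / (1 - (θ : ℝ)) * xbar ≤ (Real.sqrt x - b) ^ 2 := by
    intro hx ⟨θ, hθ0, hθ1⟩
    simp only
    have hx0 : 0 < x := lt_of_lt_of_le hxbar hx
    have ha0 : 0 < Real.sqrt x := Real.sqrt_pos.mpr hx0
    have ha2 : Real.sqrt x ^ 2 = x := Real.sq_sqrt hx0.le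
    set a := Real.sqrt x with ha
    have hs : (0:ℝ) < 1 - θ := by linarith
    rw [div_mul_eq_mul_div, sub_le_iff_le_add, ← sub_le_iff_le_add', le_div_iff₀ hs,
      ← ha2, ← hb2]
    nlinarith [sq_nonneg ((1 - θ) * a - b)]
  -- main identity for x ≥ xbar : value at θ* = 1 - b/a
  have main : ∀ (hx : xbar ≤ x),
      (⨆ θ : Set.Ico (0 : ℝ) 1, ((θ : ℝ) * x - (θ : ℝ) / (1 - (θ : ℝ)) * xbar))
        = (Real.sqrt x - b) ^ 2 := by
    intro hx
    have hx0 : 0 < x := lt_of_lt_of_le hxbar hx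
    have ha0 : 0 < Real.sqrt x := Real.sqrt_pos.mpr hx0
    have ha2 : Real.sqrt x ^ 2 = x := Real.sq_sqrt hx0.le
    set a := Real.sqrt x with ha
    have hab : b ≤ a := Real.sqrt_le_sqrt hx
    have hmem : 1 - b / a ∈ Set.Ico (0:ℝ) 1 := by
      constructor
      · have : b / a ≤ 1 := by rw [div_le_one ha0]; exact hab
        linarith
      · have : 0 < b / a := div_pos hb0 ha0
        linarith
    refine sup_eq_of_max' _ _ ⟨1 - b / a, hmem⟩ (hub hx) ?_
    simp only
    have h1 : 1 - (1 - b / a) = b / a := by ring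
    rw [h1, ← ha2, ← hb2]
    field_simp
  refine ⟨fun hx => main hx, fun hx => ?_, fun hx => ?_⟩
  · -- x < xbar : sup = 0, attained at θ = 0
    refine sup_eq_of_max' _ _ ⟨0, by norm_num⟩ ?_ (by norm_num)
    rintro ⟨θ, hθ0, hθ1⟩
    simp only
    have hs : (0:ℝ) < 1 - θ := by linarith
    rw [div_mul_eq_mul_div, sub_nonpos, le_div_iff₀ hs]
    rcases le_or_gt 0 x with hx0 | hx0
    · nlinarith [mul_nonneg hθ0 (by linarith : (0:ℝ) ≤ xbar - x),
        mul_nonneg (mul_nonneg hθ0 hθ0) hx0]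
    · nlinarith [mul_nonneg (mul_nonneg hθ0 hs.le) (by linarith : (0:ℝ) ≤ -x),
        mul_nonneg hθ0 hxbar.le]
  · -- xbar < x
    have hx0 : 0 < x := lt_trans hxbar hx
    have ha0 : 0 < Real.sqrt x := Real.sqrt_pos.mpr hx0
    have ha2 : Real.sqrt x ^ 2 = x := Real.sq_sqrt hx0.le
    set a := Real.sqrt x with ha
    have hab : b < a := Real.sqrt_lt_sqrt hxbar.le hx
    have hsx : Real.sqrt (xbar / x) = b / a := Real.sqrt_div hxbar.le x
    have hba1 : b / a < 1 := (div_lt_one ha0).mpr hab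
    have hba0 : 0 < b / a := div_pos hb0 ha0
    refine ⟨⟨by rw [hsx]; linarith, by rw [hsx]; linarith⟩, ?_, ?_⟩
    · rw [main hx.le, hsx]
      have h1 : 1 - (1 - b / a) = b / a := by ring
      rw [h1, ← ha2, ← hb2]
      field_simp
    · rintro θ ⟨hθ0, hθ1⟩ hval
      rw [main hx.le] at hval
      have hs : (0:ℝ) < 1 - θ := by linarith
      have key : ((1 - θ) * a - b) ^ 2
          = (1 - θ) * ((a - b) ^ 2 - (θ * x - θ / (1 - θ) * xbar)) := by
        rw [← ha2, ← hb2]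
        field_simp
        ring
      rw [hval, sub_self, mul_zero] at key
      have h2 : (1 - θ) * a - b = 0 := by
        have := sq_eq_zero_iff.mp key
        exact this
      rw [hsx]
      have : 1 - θ = b / a := by
        field_simp
        linarith [h2]
      linarith
end
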